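/- arXiv:2112.05507 — 6 statements merged into one kernel-verified Lean document; each statement's English description precedes it below -/
import Mathlib

section
/- For all positive integers k, b, n with 1 ≤ k < b, we have k·C(n+b-k, n) + C(n+b-k, n+1) ≤ C(n+b, n+1), with equality if and only if k = 1. -/
/-- Combinatoric inequality (2.8): for 1 ≤ k < b,
    k·C(n+b-k,n)+C(n+b-k,n+1) ≤ C(n+b,n+1), with equality iff k = 1. -/
theorem choose_ineq (k b n : ℕ) (hn : 0 < n) (hk : 1 ≤ k) (hkb : k < b) :
    k * (n + b - k).choose n + (n + b - k).choose (n + 1) ≤ (n + b).choose (n + 1) ∧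
    (k * (n + b - k).choose n + (n + b - k).choose (n + 1) = (n + b).choose (n + 1) ↔ k = 1) := by
  obtain ⟨i, rfl⟩ : ∃ i, n = i + 1 := ⟨n - 1, (Nat.succ_pred_eq_of_pos hn).symm⟩
  -- base equality for m = 1 (Pascal's rule)
  have hbase : 1 * (i + 1 + b - 1).choose (i + 1) + (i + 1 + b - 1).choose (i + 1 + 1)
      = (i + 1 + b).choose (i + 1 + 1) := by
    obtain ⟨c, rfl⟩ : ∃ c, b = c + 1 := ⟨b - 1, by omega⟩
    have h1 : i + 1 + (c + 1) - 1 = i + 1 + c := by omega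
    have h2 : i + 1 + (c + 1) = (i + 1 + c) + 1 := by omega
    rw [h1, h2, one_mul, Nat.choose_succ_succ (i + 1 + c) (i + 1)]
  -- decreasing induction step encoded as a strengthened inequality
  have aux : ∀ m, 1 ≤ m → m ≤ b →
      m * (i + 1 + b - m).choose (i + 1) + (i + 1 + b - m).choose (i + 1 + 1) + (m - 1)
        ≤ (i + 1 + b).choose (i + 1 + 1) := by
    intro m hm
    induction m, hm using Nat.le_induction with
    | base => intro _; simpa using hbase.le
    | succ m hm ih =>
      intro hmb
      have ihb := ih (by omega)
      obtain ⟨j, hj⟩ : ∃ j, b = m + 1 + j := ⟨b - (m + 1), by omega⟩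
      have e1 : i + 1 + b - m = (i + 1 + j) + 1 := by omega
      have e2 : i + 1 + b - (m + 1) = i + 1 + j := by omega
      rw [e1] at ihb
      rw [e2]
      rw [Nat.choose_succ_succ (i + 1 + j) i, Nat.choose_succ_succ (i + 1 + j) (i + 1)] at ihb
      simp only [Nat.succ_eq_add_one] at ihb
      have hpos : 1 ≤ (i + 1 + j).choose i := Nat.choose_pos (by omega)
      obtain ⟨p, rfl⟩ : ∃ p, m = p + 1 := ⟨m - 1, by omega⟩
      simp only [Nat.add_sub_cancel] at ihb ⊢
      nlinarith [ihb, hpos]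
  have hineq := aux k hk (le_of_lt hkb)
  refine ⟨by omega, ⟨fun h => ?_, fun h => by rw [h]; exact hbase⟩⟩
  by_contra hk1
  have : 2 ≤ k := by omega
  omega
end

section
/- Let U be an s×s {0,1}-matrix with UᵀU = I_s and let b, n be positive integers with 0 ≤ b-s ≤ n. For the b×b block matrix N = [[U, 0],[𝟏, L_{b-s}]] (with L_{b-s} the strictly lower triangular all-ones matrix and 𝟏 an all-ones block), we have ‖N^n‖ = s·2^{b-s}. -/
/-- The k×k strictly lower triangular all-ones matrix. -/
def L (k : ℕ) : Matrix (Fin k) (Fin k) ℕ :=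
  Matrix.of fun i j => if (j : ℕ) < (i : ℕ) then 1 else 0

open Matrix Finset

lemma two_pow_sum (m : ℕ) : ∑ j ∈ Finset.range m, 2 ^ j + 1 = 2 ^ m := by
  induction m with
  | zero => simp
  | succ m ih => rw [Finset.sum_range_succ, pow_succ]; omega

/-- A 0/1 matrix with orthonormal columns has all row sums equal to 1. -/
lemma rowsum_one {s : ℕ} (U : Matrix (Fin s) (Fin s) ℕ)
    (h01 : ∀ i j, U i j = 0 ∨ U i j = 1) (hU : U.transpose * U = 1) :
    ∀ i, ∑ j, U i j = 1 := by
  have hcol : ∀ j, ∑ i, U i j = 1 := by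
    intro j
    have h := congrFun (congrFun hU j) j
    simp only [Matrix.mul_apply, Matrix.transpose_apply, Matrix.one_apply_eq] at h
    calc ∑ i, U i j = ∑ i, U i j * U i j := by
          refine Finset.sum_congr rfl fun i _ => ?_
          rcases h01 i j with h0 | h1
          · simp [h0]
          · simp [h1]
      _ = 1 := h
  have horth : ∀ j j', j ≠ j' → ∑ i, U i j * U i j' = 0 := by
    intro j j' hne
    have h := congrFun (congrFun hU j) j'
    simpa [Matrix.mul_apply, Matrix.transpose_apply, Matrix.one_apply, hne] using h
  have hex : ∀ j, ∃ i, U i j = 1 := by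
    intro j
    by_contra h
    push_neg at h
    have hz : ∑ i, U i j = 0 := Finset.sum_eq_zero fun i _ => by
      rcases h01 i j with h0 | h1
      · exact h0
      · exact absurd h1 (h i)
    rw [hcol j] at hz; exact one_ne_zero hz
  choose f hf using hex
  have huniq : ∀ i j, U i j = 1 → i = f j := by
    intro i j h1
    by_contra hne
    have hpair : ∑ x ∈ ({i, f j} : Finset (Fin s)), U x j ≤ ∑ x, U x j :=
      Finset.sum_le_sum_of_subset (Finset.subset_univ _)
    rw [Finset.sum_pair hne, h1, hf j, hcol j] at hpair
    omega
  have hinj : Function.Injective f := by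
    intro j j' hjj
    by_contra hne
    have e2 : U (f j) j' = 1 := by rw [hjj]; exact hf j'
    have h1 : U (f j) j * U (f j) j' = 1 := by rw [hf j, e2]
    have hle : U (f j) j * U (f j) j' ≤ ∑ i, U i j * U i j' :=
      Finset.single_le_sum (f := fun i => U i j * U i j')
        (fun i _ => Nat.zero_le _) (Finset.mem_univ (f j))
    rw [horth j j' hne, h1] at hle
    omega
  have hbij : Function.Bijective f := (Finite.injective_iff_bijective).mp hinj
  let e : Fin s ≃ Fin s := Equiv.ofBijective f hbij
  intro i
  have hval : ∀ j, U i j = if j = e.symm i then 1 else 0 := by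
    intro j
    by_cases hj : j = e.symm i
    · subst hj
      have hfe : f (e.symm i) = i := e.apply_symm_apply i
      rw [if_pos rfl]
      have h := hf (e.symm i)
      rwa [hfe] at h
    · rw [if_neg hj]
      rcases h01 i j with h0 | h1
      · exact h0
      · exfalso
        apply hj
        have hij : e j = i := (huniq i j h1).symm
        rw [← hij, Equiv.symm_apply_apply]
  calc ∑ j, U i j = ∑ j, if j = e.symm i then 1 else 0 :=
        Finset.sum_congr rfl fun j _ => hval j
    _ = 1 := by simp

lemma block_pow_sum (s k n : ℕ) (hk : k ≤ n) (U : Matrix (Fin s) (Fin s) ℕ)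
    (hrow : ∀ i, ∑ j, U i j = 1) :
    (∑ i, ∑ j,
      ((Matrix.fromBlocks U 0 (Matrix.of fun _ _ => (1 : ℕ)) (L k)) ^ n) i j)
      = s * 2 ^ k := by
  set N : Matrix (Fin s ⊕ Fin k) (Fin s ⊕ Fin k) ℕ :=
    Matrix.fromBlocks U 0 (Matrix.of fun _ _ => (1 : ℕ)) (L k) with hN
  set r : ℕ → (Fin s ⊕ Fin k) → ℕ := fun n i => ∑ j, (N ^ n) i j with hr
  have hrec : ∀ m i, r (m + 1) i = ∑ x, N i x * r m x := by
    intro m i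
    show ∑ j, (N ^ (m + 1)) i j = _
    simp only [pow_succ', Matrix.mul_apply]
    rw [Finset.sum_comm]
    exact Finset.sum_congr rfl fun x _ => (Finset.mul_sum _ _ _).symm
  have htop : ∀ m (i : Fin s), r m (Sum.inl i) = 1 := by
    intro m
    induction m with
    | zero => intro i; simp [hr, Matrix.one_apply]
    | succ m ih =>
      intro i
      rw [hrec, Fintype.sum_sum_type]
      simp only [hN, Matrix.fromBlocks_apply₁₁, Matrix.fromBlocks_apply₁₂,
        Matrix.zero_apply, zero_mul, Finset.sum_const_zero, add_zero]
      calc ∑ x, U i x * r m (Sum.inl x) = ∑ x, U i x := by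
            refine Finset.sum_congr rfl fun x _ => ?_
            rw [ih x, mul_one]
        _ = 1 := hrow i
  have hbot : ∀ m (i : Fin k), (i : ℕ) < m → r m (Sum.inr i) = s * 2 ^ (i : ℕ) := by
    intro m
    induction m with
    | zero => intro i hi; omega
    | succ m ih =>
      intro i hi
      rw [hrec, Fintype.sum_sum_type]
      have h1 : ∑ x, N (Sum.inr i) (Sum.inl x) * r m (Sum.inl x) = s := by
        simp only [hN, Matrix.fromBlocks_apply₂₁, Matrix.of_apply, one_mul]
        calc ∑ x : Fin s, r m (Sum.inl x) = ∑ x : Fin s, 1 :=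
              Finset.sum_congr rfl fun x _ => htop m x
          _ = s := by simp
      have h2 : ∑ x, N (Sum.inr i) (Sum.inr x) * r m (Sum.inr x)
          = ∑ x : Fin k, if (x : ℕ) < (i : ℕ) then s * 2 ^ (x : ℕ) else 0 := by
        refine Finset.sum_congr rfl fun x _ => ?_
        simp only [hN, Matrix.fromBlocks_apply₂₂, L, Matrix.of_apply]
        by_cases hx : (x : ℕ) < (i : ℕ)
        · rw [if_pos hx, if_pos hx, one_mul, ih x (by omega)]
        · rw [if_neg hx, if_neg hx, zero_mul]
      rw [h1, h2]
      have h3 : (∑ x : Fin k, if (x : ℕ) < (i : ℕ) then s * 2 ^ (x : ℕ) else 0)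
          = ∑ x ∈ Finset.range (i : ℕ), s * 2 ^ x := by
        rw [Fin.sum_univ_eq_sum_range (fun x => if x < (i : ℕ) then s * 2 ^ x else 0) k]
        rw [Finset.sum_congr rfl (fun x hx => by
          rw [show (if x < (i : ℕ) then s * 2 ^ x else 0)
            = if x ∈ Finset.range (i : ℕ) then s * 2 ^ x else 0 by
              simp [Finset.mem_range]])]
        rw [Finset.sum_ite_mem,
          Finset.inter_eq_right.mpr (Finset.range_subset_range.mpr (le_of_lt i.isLt))]
      rw [h3, ← Finset.mul_sum]
      have h4 := two_pow_sum (i : ℕ)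
      calc s + s * ∑ x ∈ Finset.range (i : ℕ), 2 ^ x
          = s * (∑ x ∈ Finset.range (i : ℕ), 2 ^ x + 1) := by ring
        _ = s * 2 ^ (i : ℕ) := by rw [h4]
  have hfin : (∑ i, ∑ j, (N ^ n) i j) = ∑ i, r n i := rfl
  rw [hfin, Fintype.sum_sum_type]
  have hA : ∑ i : Fin s, r n (Sum.inl i) = s := by
    rw [Finset.sum_congr rfl fun i _ => htop n i]; simp
  have hB : ∑ i : Fin k, r n (Sum.inr i) = s * (2 ^ k - 1) := by
    rw [Finset.sum_congr rfl fun i _ => hbot n i (lt_of_lt_of_le i.isLt hk)]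
    rw [Fin.sum_univ_eq_sum_range (fun x => s * 2 ^ x) k, ← Finset.mul_sum]
    have := two_pow_sum k
    have h2 : ∑ j ∈ Finset.range k, 2 ^ j = 2 ^ k - 1 := by omega
    rw [h2]
  rw [hA, hB]
  have h1 : 1 ≤ 2 ^ k := Nat.one_le_two_pow
  conv_rhs => rw [← Nat.sub_add_cancel h1]
  rw [Nat.mul_add, mul_one]
  omega

/-- For a {0,1}-matrix U with UᵀU = I and b, n with b - s ≤ n, the entrywise sum of
    the n-th power of the block matrix [[U,0],[𝟏,L_{b-s}]] equals s·2^{b-s}. -/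
theorem norm_block_pow (s b n : ℕ) (hs : 0 < s) (hsb : s ≤ b) (hb : 0 < b) (hn : 0 < n)
    (hbs : b - s ≤ n) (U : Matrix (Fin s) (Fin s) ℕ)
    (h01 : ∀ i j, U i j = 0 ∨ U i j = 1) (hU : U.transpose * U = 1) :
    (∑ i, ∑ j,
      ((Matrix.fromBlocks U 0 (Matrix.of fun _ _ => (1 : ℕ)) (L (b - s))) ^ n) i j)
      = s * 2 ^ (b - s) := by
  exact block_pow_sum s (b - s) n hbs U (rowsum_one U h01 hU)
end

section
/- Let M be a b×b nonzero {0,1}-matrix satisfying condition P1 (for every index i whose column c_i(M) is nonzero, the row r_i(M) is nonzero). Then the sequence ‖M^n‖ (n ≥ 1) is nondecreasing; in particular M^b ≠ 0 and D_M ≠ ∅. -/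
open Matrix Finset

private lemma pow_ne_zero_of_path' {b : ℕ} (M : Matrix (Fin b) (Fin b) ℕ)
    (v : ℕ → Fin b) :
    ∀ n, (∀ t < n, M (v t) (v (t + 1)) ≠ 0) → (M ^ n) (v 0) (v n) ≠ 0 := by
  intro n
  induction n with
  | zero => intro _; simp [Matrix.one_apply]
  | succ m ih =>
    intro h
    have h1 : (M ^ m) (v 0) (v m) ≠ 0 := ih fun t ht => h t (Nat.lt_succ_of_lt ht)
    have h2 : M (v m) (v (m + 1)) ≠ 0 := h m (Nat.lt_succ_self m)
    have he : (M ^ (m + 1)) (v 0) (v (m + 1))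
        = ∑ l, (M ^ m) (v 0) l * M l (v (m + 1)) := by
      rw [pow_succ, Matrix.mul_apply]
    rw [he]
    intro hz
    rw [Finset.sum_eq_zero_iff] at hz
    exact Nat.mul_ne_zero h1 h2 (hz (v m) (Finset.mem_univ _))

private lemma path_of_pow_ne_zero' {b : ℕ} (M : Matrix (Fin b) (Fin b) ℕ) :
    ∀ n (i j : Fin b), (M ^ n) i j ≠ 0 →
      ∃ v : ℕ → Fin b, v 0 = i ∧ v n = j ∧ ∀ t < n, M (v t) (v (t + 1)) ≠ 0 := by
  intro n
  induction n with
  | zero =>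
    intro i j h
    simp only [pow_zero, Matrix.one_apply, ne_eq, ite_eq_right_iff, not_forall] at h
    exact ⟨fun _ => i, rfl, h.1 ▸ rfl, fun t ht => absurd ht (Nat.not_lt_zero t)⟩
  | succ m ih =>
    intro i j h
    rw [pow_succ, Matrix.mul_apply] at h
    obtain ⟨l, _, hl⟩ := Finset.exists_ne_zero_of_sum_ne_zero h
    have h1 : (M ^ m) i l ≠ 0 := fun hz => hl (by simp [hz])
    have h2 : M l j ≠ 0 := fun hz => hl (by simp [hz])
    obtain ⟨v, hv0, hvm, hve⟩ := ih i l h1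
    refine ⟨fun t => if t = m + 1 then j else v t, by simp [hv0], by simp, ?_⟩
    intro t ht
    rcases Nat.lt_or_ge t m with h' | h'
    · have : t ≠ m + 1 := by omega
      have : t + 1 ≠ m + 1 := by omega
      simpa only [if_neg ‹t ≠ m + 1›, if_neg ‹t + 1 ≠ m + 1›] using hve t h'
    · have ht' : t = m := by omega
      subst ht'
      simpa [hvm] using h2

/-- For a nonzero {0,1}-matrix M satisfying P1 (row i nonzero whenever column i
    nonzero), the sequence ‖M^n‖ is nondecreasing; in particular M^b ≠ 0 and
    D_M ≠ ∅. -/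
theorem P1_norm_monotone (b : ℕ) (M : Matrix (Fin b) (Fin b) ℕ)
    (h01 : ∀ i j, M i j = 0 ∨ M i j = 1) (hM : M ≠ 0)
    (hP1 : ∀ i : Fin b, (∃ j, M j i ≠ 0) → ∃ j, M i j ≠ 0) :
    (∀ n : ℕ, 0 < n → (∑ i, ∑ j, (M ^ n) i j) ≤ ∑ i, ∑ j, (M ^ (n + 1)) i j) ∧
    M ^ b ≠ 0 ∧ ∃ (i : Fin b) (k : ℕ), 0 < k ∧ 1 ≤ (M ^ k) i i := by
  -- key: a nonzero entry in column k of M^n (n ≥ 1) means column k of M is nonzero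
  have key : ∀ n, 0 < n → ∀ i k : Fin b, (M ^ n) i k ≠ 0 → ∃ l, M l k ≠ 0 := by
    intro n hn i k h
    obtain ⟨m, rfl⟩ := Nat.exists_eq_succ_of_ne_zero hn.ne'
    rw [pow_succ, Matrix.mul_apply] at h
    obtain ⟨l, _, hl⟩ := Finset.exists_ne_zero_of_sum_ne_zero h
    exact ⟨l, fun hz => hl (by simp [hz])⟩
  have mono : ∀ n : ℕ, 0 < n →
      (∑ i, ∑ j, (M ^ n) i j) ≤ ∑ i, ∑ j, (M ^ (n + 1)) i j := by
    intro n hn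
    refine Finset.sum_le_sum fun i _ => ?_
    have he : ∑ j, (M ^ (n + 1)) i j = ∑ k, (M ^ n) i k * ∑ j, M k j := by
      simp only [pow_succ, Matrix.mul_apply, Finset.mul_sum]
      rw [Finset.sum_comm]
    rw [he]
    refine Finset.sum_le_sum fun k _ => ?_
    by_cases hk : (M ^ n) i k = 0
    · simp [hk]
    · obtain ⟨l, hl⟩ := key n hn i k hk
      obtain ⟨j, hj⟩ := hP1 k ⟨l, hl⟩
      have h1 : 1 ≤ ∑ j, M k j :=
        le_trans (Nat.one_le_iff_ne_zero.mpr hj)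
          (Finset.single_le_sum (fun _ _ => Nat.zero_le _) (Finset.mem_univ j))
      calc (M ^ n) i k = (M ^ n) i k * 1 := (mul_one _).symm
        _ ≤ (M ^ n) i k * ∑ j, M k j := Nat.mul_le_mul_left _ h1
  refine ⟨mono, ?_⟩
  -- M has a nonzero entry
  have hb : 0 < b := by
    rcases Nat.eq_zero_or_pos b with rfl | h
    · exact absurd (by ext i; exact i.elim0) hM
    · exact h
  have hex : ∃ i j : Fin b, M i j ≠ 0 := by
    by_contra h
    push_neg at h
    exact hM (by ext i j; exact h i j)
  obtain ⟨i0, j0, hij0⟩ := hex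
  -- sums of powers are ≥ 1 for all n ≥ 1
  have hsum : ∀ n, 0 < n → 1 ≤ ∑ i, ∑ j, (M ^ n) i j := by
    intro n hn
    induction n with
    | zero => omega
    | succ m ih =>
      rcases Nat.eq_zero_or_pos m with rfl | hm
      · have : 1 ≤ M i0 j0 := Nat.one_le_iff_ne_zero.mpr hij0
        calc 1 ≤ M i0 j0 := this
          _ ≤ ∑ j, M i0 j :=
            Finset.single_le_sum (fun _ _ => Nat.zero_le _) (Finset.mem_univ j0)
          _ ≤ ∑ i, ∑ j, M i j :=
            Finset.single_le_sum (f := fun i => ∑ j, M i j)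
              (fun _ _ => Nat.zero_le _) (Finset.mem_univ i0)
          _ = ∑ i, ∑ j, (M ^ (0 + 1)) i j := by simp
      · exact le_trans (ih hm) (mono m hm)
  have hpowb : M ^ b ≠ 0 := by
    intro hz
    have := hsum b hb
    rw [hz] at this
    simp at this
  refine ⟨hpowb, ?_⟩
  -- get a path of length b, pigeonhole gives a cycle
  have hexb : ∃ i j : Fin b, (M ^ b) i j ≠ 0 := by
    by_contra h
    push_neg at h
    exact hpowb (by ext i j; exact h i j)
  obtain ⟨i, j, hij⟩ := hexb
  obtain ⟨v, hv0, hvb, hve⟩ := path_of_pow_ne_zero' M b i j hij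
  have hcard : Fintype.card (Fin b) < Fintype.card (Fin (b + 1)) := by simp
  obtain ⟨s, t, hst, heq⟩ :=
    Fintype.exists_ne_map_eq_of_card_lt (fun x : Fin (b + 1) => v x.val) hcard
  have main : ∀ s t : ℕ, s < t → t ≤ b → v s = v t →
      ∃ (i : Fin b) (k : ℕ), 0 < k ∧ 1 ≤ (M ^ k) i i := by
    intro s t hlt htb heq
    have hpath : (M ^ (t - s)) (v s) (v (s + (t - s))) ≠ 0 := by
      have := pow_ne_zero_of_path' M (fun u => v (s + u)) (t - s)
        (fun u hu => by
          have : s + u < b := by omega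
          simpa [Nat.add_assoc] using hve (s + u) this)
      simpa using this
    have hts : s + (t - s) = t := by omega
    rw [hts, ← heq] at hpath
    exact ⟨v s, t - s, by omega, Nat.one_le_iff_ne_zero.mpr hpath⟩
  have hvne : (s : ℕ) ≠ (t : ℕ) := fun h => hst (Fin.ext h)
  rcases lt_or_gt_of_ne hvne with hlt | hlt
  · exact main s t hlt (Nat.lt_succ_iff.mp t.isLt) heq
  · exact main t s hlt (Nat.lt_succ_iff.mp s.isLt) heq.symm
end

section
/- Let M be a b×b {0,1}-matrix satisfying P1 and P2. Then every infinite M-admissible word is ultimately periodic. -/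
/-- A walk of length `n` contributes at least 1 to the corresponding entry of `M ^ n`. -/
lemma walk_one {b : ℕ} (M : Matrix (Fin b) (Fin b) ℕ) :
    ∀ (n : ℕ) (c : ℕ → Fin b), (∀ s < n, 1 ≤ M (c s) (c (s + 1))) →
      1 ≤ (M ^ n) (c 0) (c n) := by
  intro n
  induction n with
  | zero => intro c _; simp [Matrix.one_apply_eq]
  | succ n ih =>
    intro c hc
    rw [pow_succ, Matrix.mul_apply]
    have h1 := ih c (fun s hs => hc s (Nat.lt_succ_of_lt hs))
    have h2 := hc n (Nat.lt_succ_self n)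
    calc 1 = 1 * 1 := by ring
      _ ≤ (M ^ n) (c 0) (c n) * M (c n) (c (n + 1)) := Nat.mul_le_mul h1 h2
      _ ≤ ∑ k, (M ^ n) (c 0) k * M k (c (n + 1)) :=
          Finset.single_le_sum (f := fun k => (M ^ n) (c 0) k * M k (c (n + 1)))
            (fun k _ => Nat.zero_le _) (Finset.mem_univ _)

/-- Two distinct walks of length `n` with the same endpoints contribute at least 2. -/
lemma walk_two {b : ℕ} (M : Matrix (Fin b) (Fin b) ℕ) :
    ∀ (n : ℕ) (c d : ℕ → Fin b), (∀ s < n, 1 ≤ M (c s) (c (s + 1))) →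
      (∀ s < n, 1 ≤ M (d s) (d (s + 1))) → c 0 = d 0 → c n = d n →
      (∃ s ≤ n, c s ≠ d s) → 2 ≤ (M ^ n) (c 0) (c n) := by
  intro n
  induction n with
  | zero =>
    rintro c d _ _ h0 _ ⟨s, hs, hne⟩
    interval_cases s
    exact absurd h0 hne
  | succ n ih =>
    rintro c d hc hd h0 hn ⟨s, hs, hne⟩
    have hs' : s ≤ n := by
      by_contra h
      have : s = n + 1 := by omega
      exact hne (this ▸ hn)
    rw [pow_succ, Matrix.mul_apply]
    by_cases hmid : c n = d n
    · have h2 : 2 ≤ (M ^ n) (c 0) (c n) :=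
        ih c d (fun t ht => hc t (Nat.lt_succ_of_lt ht))
          (fun t ht => hd t (Nat.lt_succ_of_lt ht)) h0 hmid ⟨s, hs', hne⟩
      calc 2 = 2 * 1 := by ring
        _ ≤ (M ^ n) (c 0) (c n) * M (c n) (c (n + 1)) :=
            Nat.mul_le_mul h2 (hc n (Nat.lt_succ_self n))
        _ ≤ ∑ k, (M ^ n) (c 0) k * M k (c (n + 1)) :=
            Finset.single_le_sum (f := fun k => (M ^ n) (c 0) k * M k (c (n + 1)))
            (fun k _ => Nat.zero_le _) (Finset.mem_univ _)
    · have e1 : 1 ≤ (M ^ n) (c 0) (c n) * M (c n) (c (n + 1)) := by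
        have := walk_one M n c (fun t ht => hc t (Nat.lt_succ_of_lt ht))
        have h2 := hc n (Nat.lt_succ_self n)
        calc 1 = 1 * 1 := by ring
          _ ≤ _ := Nat.mul_le_mul this h2
      have e2 : 1 ≤ (M ^ n) (c 0) (d n) * M (d n) (c (n + 1)) := by
        have h1 := walk_one M n d (fun t ht => hd t (Nat.lt_succ_of_lt ht))
        rw [← h0] at h1
        have h2 := hd n (Nat.lt_succ_self n)
        rw [← hn] at h2
        calc 1 = 1 * 1 := by ring
          _ ≤ _ := Nat.mul_le_mul h1 h2
      calc 2 ≤ ∑ k ∈ ({c n, d n} : Finset (Fin b)), (M ^ n) (c 0) k * M k (c (n + 1)) := by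
            rw [Finset.sum_pair hmid]; omega
        _ ≤ ∑ k, (M ^ n) (c 0) k * M k (c (n + 1)) :=
            Finset.sum_le_sum_of_subset (Finset.subset_univ _)

/-- For M satisfying P1 and P2, every infinite M-admissible word is ultimately
    periodic. -/
theorem ultimately_periodic (b : ℕ) (M : Matrix (Fin b) (Fin b) ℕ)
    (h01 : ∀ i j, M i j = 0 ∨ M i j = 1)
    (hP1 : ∀ i : Fin b, (∃ j, M j i ≠ 0) → ∃ j, M i j ≠ 0)
    (hP2 : ∀ (i : Fin b) (k : ℕ), 0 < k → (M ^ k) i i ≤ 1)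
    (w : ℕ → Fin b) (hw : ∀ k, M (w k) (w (k + 1)) = 1) :
    ∃ (N p : ℕ), 0 < p ∧ ∀ k, N ≤ k → w (k + p) = w k := by
  have hb : 0 < b := Fin.pos (w 0)
  obtain ⟨i, hi'⟩ := Finite.exists_infinite_fiber w
  have hi : (w ⁻¹' {i}).Infinite := Set.infinite_coe_iff.mp hi'
  obtain ⟨t0, ht0m, -⟩ := hi.exists_gt 0
  obtain ⟨t1, ht1m, hlt⟩ := hi.exists_gt t0
  have hwt0 : w t0 = i := ht0m
  have hwt1 : w t1 = i := ht1m
  set a := t1 - t0 with ha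
  have hapos : 0 < a := by omega
  refine ⟨t0, a, hapos, ?_⟩
  intro k hk
  obtain ⟨m, hmm, hmk⟩ := hi.exists_gt (k + a)
  have hwm : w m = i := hmm
  set L := m - t0 with hL
  have hmL : m = t0 + L := by omega
  have haL : a < L := by omega
  -- two walks of length L + a from i to i
  set u : ℕ → Fin b := fun s => if s ≤ L then w (t0 + s) else w (t0 + (s - L)) with hu
  set v : ℕ → Fin b := fun s => if s ≤ a then w (t0 + s) else w (t0 + (s - a)) with hv
  have hwedge : ∀ s, 1 ≤ M (w s) (w (s + 1)) := fun s => le_of_eq (hw s).symm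
  have hcu : ∀ s < L + a, 1 ≤ M (u s) (u (s + 1)) := by
    intro s hs
    rcases lt_trichotomy s L with h | h | h
    · have e1 : u s = w (t0 + s) := if_pos (le_of_lt h)
      have e2 : u (s + 1) = w (t0 + s + 1) := by
        have : u (s + 1) = w (t0 + (s + 1)) := if_pos h
        rw [this, ← Nat.add_assoc]
      rw [e1, e2]; exact hwedge (t0 + s)
    · subst h
      have e1 : u L = w t0 := by
        have : u L = w (t0 + L) := if_pos le_rfl
        rw [this, ← hmL, hwm, ← hwt0]
      have e2 : u (L + 1) = w (t0 + 1) := by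
        have : u (L + 1) = w (t0 + (L + 1 - L)) := if_neg (by omega)
        rw [this]; congr 1; omega
      rw [e1, e2]; exact hwedge t0
    · have e1 : u s = w (t0 + (s - L)) := if_neg (by omega)
      have e2 : u (s + 1) = w (t0 + (s - L) + 1) := by
        have : u (s + 1) = w (t0 + (s + 1 - L)) := if_neg (by omega)
        rw [this]; congr 1; omega
      rw [e1, e2]; exact hwedge (t0 + (s - L))
  have hcv : ∀ s < L + a, 1 ≤ M (v s) (v (s + 1)) := by
    intro s hs
    rcases lt_trichotomy s a with h | h | h
    · have e1 : v s = w (t0 + s) := if_pos (le_of_lt h)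
      have e2 : v (s + 1) = w (t0 + s + 1) := by
        have : v (s + 1) = w (t0 + (s + 1)) := if_pos h
        rw [this, ← Nat.add_assoc]
      rw [e1, e2]; exact hwedge (t0 + s)
    · subst h
      have e1 : v a = w t0 := by
        have : v a = w (t0 + a) := if_pos le_rfl
        have h2 : t0 + a = t1 := by omega
        rw [this, h2, hwt1, ← hwt0]
      have e2 : v (a + 1) = w (t0 + 1) := by
        have : v (a + 1) = w (t0 + (a + 1 - a)) := if_neg (by omega)
        rw [this]; congr 1; omega
      rw [e1, e2]; exact hwedge t0
    · have e1 : v s = w (t0 + (s - a)) := if_neg (by omega)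
      have e2 : v (s + 1) = w (t0 + (s - a) + 1) := by
        have : v (s + 1) = w (t0 + (s + 1 - a)) := if_neg (by omega)
        rw [this]; congr 1; omega
      rw [e1, e2]; exact hwedge (t0 + (s - a))
  have hu0 : u 0 = i := by
    have : u 0 = w (t0 + 0) := if_pos (Nat.zero_le _)
    rw [this]; simpa using hwt0
  have hv0 : v 0 = i := by
    have : v 0 = w (t0 + 0) := if_pos (Nat.zero_le _)
    rw [this]; simpa using hwt0
  have huend : u (L + a) = i := by
    have : u (L + a) = w (t0 + (L + a - L)) := if_neg (by omega)
    rw [this]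
    have h2 : t0 + (L + a - L) = t1 := by omega
    rw [h2, hwt1]
  have hvend : v (L + a) = i := by
    have : v (L + a) = w (t0 + (L + a - a)) := if_neg (by omega)
    rw [this]
    have h2 : t0 + (L + a - a) = m := by omega
    rw [h2, hwm]
  by_contra hne
  -- the two walks differ at s0 = k + a - t0
  set s0 := k + a - t0 with hs0
  have hus0 : u s0 = w (k + a) := by
    have : u s0 = w (t0 + s0) := if_pos (by omega)
    rw [this]; congr 1; omega
  have hvs0 : v s0 = w k := by
    rcases eq_or_lt_of_le (show a ≤ s0 by omega) with h | h
    · have : v s0 = w (t0 + s0) := if_pos (le_of_eq h.symm)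
      rw [this]
      have h2 : t0 + s0 = t1 := by omega
      have h3 : k = t0 := by omega
      rw [h2, hwt1, h3, hwt0]
    · have : v s0 = w (t0 + (s0 - a)) := if_neg (by omega)
      rw [this]; congr 1; omega
  have hdiff : ∃ s ≤ L + a, u s ≠ v s := by
    refine ⟨s0, by omega, ?_⟩
    rw [hus0, hvs0]; exact hne
  have h2 := walk_two M (L + a) u v hcu hcv (hu0.trans hv0.symm)
    (huend.trans hvend.symm) hdiff
  rw [hu0, huend] at h2
  have := hP2 i (L + a) (by omega)
  omega
end

section
/- Let M be a b×b {0,1}-matrix satisfying P1 and P2. Then the sequence ‖M^n‖ is bounded if and only if for every i ∈ D_M there is exactly one infinite M-admissible word starting with i. -/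
open Finset

namespace BoundedIffUnique

variable {b : ℕ} (M : Matrix (Fin b) (Fin b) ℕ)

def IsWalk {n : ℕ} (p : Fin (n+1) → Fin b) : Prop :=
  ∀ k : Fin n, M (p k.castSucc) (p k.succ) = 1

instance {n : ℕ} (p : Fin (n+1) → Fin b) : Decidable (IsWalk M p) := by
  unfold IsWalk; infer_instance

def Wset (n : ℕ) : Finset (Fin (n+1) → Fin b) := univ.filter (fun p => IsWalk M p)

def Wij (n : ℕ) (i j : Fin b) : Finset (Fin (n+1) → Fin b) :=
  univ.filter (fun p => p 0 = i ∧ p (Fin.last n) = j ∧ IsWalk M p)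

lemma pow_apply_eq_card (h01 : ∀ i j, M i j = 0 ∨ M i j = 1) :
    ∀ (n : ℕ) (i j : Fin b), (M ^ n) i j = (Wij M n i j).card := by
  intro n
  induction n with
  | zero =>
    intro i j
    simp only [pow_zero, Matrix.one_apply]
    by_cases h : i = j
    · subst h
      rw [if_pos rfl]
      have : Wij M 0 i i = {fun _ => i} := by
        ext p
        simp only [Wij, mem_filter, mem_univ, true_and, mem_singleton]
        constructor
        · rintro ⟨h0, -, -⟩
          funext x
          have hx : x = 0 := Fin.ext (by omega)
          rw [hx, h0]
        · rintro rfl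
          exact ⟨rfl, rfl, fun k => k.elim0⟩
      rw [this, card_singleton]
    · rw [if_neg h]
      symm
      rw [card_eq_zero, eq_empty_iff_forall_notMem]
      intro p hp
      simp only [Wij, mem_filter] at hp
      exact h (by rw [← hp.2.1, show (0 : Fin (0+1)) = Fin.last 0 from Fin.ext rfl, hp.2.2.1])
  | succ n ih =>
    intro i j
    rw [pow_succ', Matrix.mul_apply]
    have hfib : (Wij M (n+1) i j).card
        = ∑ k : Fin b, ((Wij M (n+1) i j).filter (fun p => p 1 = k)).card := by
      exact card_eq_sum_card_fiberwise (fun p _ => mem_univ (p 1))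
    rw [hfib]
    refine Finset.sum_congr rfl (fun k _ => ?_)
    rcases h01 i k with h0 | h1
    · rw [h0, zero_mul]
      symm
      rw [card_eq_zero, eq_empty_iff_forall_notMem]
      intro p hp
      simp only [Wij, mem_filter, mem_univ, true_and] at hp
      obtain ⟨⟨hp0, -, hpw⟩, hp1⟩ := hp
      have := hpw 0
      rw [Fin.castSucc_zero, Fin.succ_zero_eq_one, hp0, hp1, h0] at this
      exact absurd this zero_ne_one
    · rw [h1, one_mul, ih k j]
      apply Finset.card_bij' (fun (q : Fin (n+1) → Fin b) _ => (Fin.cons i q : Fin (n+2) → Fin b)) (fun (p : Fin (n+2) → Fin b) _ => (Fin.tail p : Fin (n+1) → Fin b))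
      · intro q hq
        simp only [Wij, mem_filter, mem_univ, true_and] at hq ⊢
        obtain ⟨hq0, hql, hqw⟩ := hq
        refine ⟨⟨?_, ?_, ?_⟩, ?_⟩
        · exact Fin.cons_zero (α := fun _ => Fin b) i q
        · rw [← Fin.succ_last, Fin.cons_succ (α := fun _ => Fin b), hql]
        · intro m
          induction m using Fin.cases with
          | zero =>
            rw [Fin.castSucc_zero, Fin.cons_succ (α := fun _ => Fin b),
              Fin.cons_zero (α := fun _ => Fin b), hq0]
            exact h1
          | succ m' =>
            rw [← Fin.succ_castSucc, Fin.cons_succ (α := fun _ => Fin b),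
              Fin.cons_succ (α := fun _ => Fin b)]
            exact hqw m'
        · rw [show (1 : Fin (n+2)) = Fin.succ 0 from (Fin.succ_zero_eq_one).symm,
            Fin.cons_succ (α := fun _ => Fin b), hq0]
      · intro p hp
        simp only [Wij, mem_filter, mem_univ, true_and, mem_filter] at hp ⊢
        obtain ⟨⟨hp0, hpl, hpw⟩, hp1⟩ := hp
        refine ⟨?_, ?_, ?_⟩
        · show p (Fin.succ 0) = k
          rw [Fin.succ_zero_eq_one, hp1]
        · show p (Fin.last n).succ = j
          rw [Fin.succ_last, hpl]
        · intro m
          have := hpw m.succ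
          rwa [← Fin.succ_castSucc] at this
      · intro q hq
        exact Fin.tail_cons (α := fun _ => Fin b) i q
      · intro p hp
        simp only [Wij, mem_filter] at hp
        rw [← hp.1.2.1]
        exact Fin.cons_self_tail (α := fun _ => Fin b) p

lemma sum_pow_eq_card (h01 : ∀ i j, M i j = 0 ∨ M i j = 1) (n : ℕ) :
    ∑ i, ∑ j, (M ^ n) i j = (Wset M n).card := by
  have hfib : (Wset M n).card
      = ∑ z ∈ (univ ×ˢ univ : Finset (Fin b × Fin b)),
          ((Wset M n).filter (fun p => (p 0, p (Fin.last n)) = z)).card :=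
    card_eq_sum_card_fiberwise (fun p _ => by simp)
  rw [hfib, Finset.sum_product]
  refine Finset.sum_congr rfl (fun i _ => Finset.sum_congr rfl (fun j _ => ?_))
  rw [pow_apply_eq_card M h01]
  congr 1
  ext p
  simp only [Wset, Wij, mem_filter, mem_univ, true_and, Prod.mk.injEq]
  tauto
noncomputable def nextV : Fin b → Fin b :=
  fun x => if h : ∃ j, M x j ≠ 0 then h.choose else x

lemma nextV_spec (h01 : ∀ i j, M i j = 0 ∨ M i j = 1)
    (hP1 : ∀ i : Fin b, (∃ j, M j i ≠ 0) → ∃ j, M i j ≠ 0)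
    (x : Fin b) (hx : ∃ j, M j x ≠ 0) : M x (nextV M x) = 1 := by
  have ho := hP1 x hx
  rw [nextV, dif_pos ho]
  rcases h01 x ho.choose with h | h
  · exact absurd h ho.choose_spec
  · exact h

noncomputable def extendW {l : ℕ} (q : Fin (l+1) → Fin b) : ℕ → Fin b :=
  fun m => if h : m ≤ l then q ⟨m, Nat.lt_succ_of_le h⟩ else (nextV M)^[m - l] (q (Fin.last l))

lemma forced (h01 : ∀ i j, M i j = 0 ∨ M i j = 1)
    (hP1 : ∀ i : Fin b, (∃ j, M j i ≠ 0) → ∃ j, M i j ≠ 0)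
    {l : ℕ} (hl : 0 < l)
    (q : Fin (l+1) → Fin b) (hq : ∀ kk : Fin l, M (q kk.castSucc) (q kk.succ) = 1)
    (u : ℕ → Fin b)
    (hu : ∀ w : ℕ → Fin b, ((∀ k, M (w k) (w (k+1)) = 1) ∧ w 0 = q 0) → w = u) :
    ∀ m (hm : m ≤ l), q ⟨m, Nat.lt_succ_of_le hm⟩ = u m := by
  set e : ℕ → Fin b := fun m => (nextV M)^[m] (q (Fin.last l)) with he_def
  have he_in : ∀ m, ∃ j, M j (e m) ≠ 0 := by
    intro m
    induction m with
    | zero =>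
      refine ⟨q ((⟨l-1, by omega⟩ : Fin l).castSucc), ?_⟩
      have h2 : (⟨l-1, by omega⟩ : Fin l).succ = Fin.last l := by
        apply Fin.ext
        simp [Fin.succ_mk, Fin.last]
        omega
      have := hq ⟨l-1, by omega⟩
      rw [h2] at this
      have he0 : e 0 = q (Fin.last l) := rfl
      rw [he0, this]
      exact one_ne_zero
    | succ m ih =>
      have hstep : e (m+1) = nextV M (e m) := Function.iterate_succ_apply' (nextV M) m _
      refine ⟨e m, ?_⟩
      rw [hstep, nextV_spec M h01 hP1 (e m) ih]
      exact one_ne_zero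
  have he_edge : ∀ m, M (e m) (e (m+1)) = 1 := by
    intro m
    have hstep : e (m+1) = nextV M (e m) := Function.iterate_succ_apply' (nextV M) m _
    rw [hstep]
    exact nextV_spec M h01 hP1 (e m) (he_in m)
  set w : ℕ → Fin b := fun m => if h : m ≤ l then q ⟨m, Nat.lt_succ_of_le h⟩ else e (m - l)
    with hw_def
  have hw_adm : ∀ m, M (w m) (w (m+1)) = 1 := by
    intro m
    by_cases h1 : m + 1 ≤ l
    · show M (w m) (w (m+1)) = 1
      rw [hw_def]
      simp only
      rw [dif_pos (by omega : m ≤ l), dif_pos h1]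
      have := hq ⟨m, by omega⟩
      simpa [Fin.castSucc_mk, Fin.succ_mk] using this
    · by_cases h2 : m ≤ l
      · rw [hw_def]
        simp only
        rw [dif_pos h2, dif_neg (by omega)]
        have h3 : m + 1 - l = 1 := by omega
        rw [h3]
        have := he_edge 0
        have he0 : e 0 = q (Fin.last l) := rfl
        rw [he0] at this
        have hql : q (Fin.last l) = q ⟨m, by omega⟩ := by
          apply congrArg q
          apply Fin.ext
          simp [Fin.last]
          omega
        rw [hql] at this
        exact this
      · rw [hw_def]
        simp only
        rw [dif_neg h2, dif_neg (by omega)]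
        have h3 : m + 1 - l = (m - l) + 1 := by omega
        rw [h3]
        exact he_edge (m - l)
  have hw0 : w 0 = q 0 := by
    rw [hw_def]
    simp only
    rw [dif_pos (Nat.zero_le l)]
    exact congrArg q (Fin.ext (by simp))
  have hwu := hu w ⟨hw_adm, hw0⟩
  intro m hm
  have : q ⟨m, Nat.lt_succ_of_le hm⟩ = w m := by
    rw [hw_def]; simp only; rw [dif_pos hm]
  rw [this, hwu]

lemma pow_apply_eq_card' (h01 : ∀ i j, M i j = 0 ∨ M i j = 1) :
    ∀ (n : ℕ) (i j : Fin b), (M ^ n) i j =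
      (univ.filter (fun p : Fin (n+1) → Fin b =>
        p 0 = i ∧ p (Fin.last n) = j ∧ ∀ k : Fin n, M (p k.castSucc) (p k.succ) = 1)).card :=
  fun n i j => pow_apply_eq_card M h01 n i j

lemma sum_pow_eq_card' (h01 : ∀ i j, M i j = 0 ∨ M i j = 1) (n : ℕ) :
    ∑ i, ∑ j, (M ^ n) i j =
      (univ.filter (fun p : Fin (n+1) → Fin b =>
        ∀ k : Fin n, M (p k.castSucc) (p k.succ) = 1)).card :=
  sum_pow_eq_card M h01 n

lemma forced' (h01 : ∀ i j, M i j = 0 ∨ M i j = 1)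
    (hP1 : ∀ i : Fin b, (∃ j, M j i ≠ 0) → ∃ j, M i j ≠ 0)
    {l : ℕ} (hl : 0 < l)
    (q : Fin (l+1) → Fin b) (hq : ∀ kk : Fin l, M (q kk.castSucc) (q kk.succ) = 1)
    (u : ℕ → Fin b)
    (hu : ∀ w : ℕ → Fin b, ((∀ k, M (w k) (w (k+1)) = 1) ∧ w 0 = q 0) → w = u) :
    ∀ m (hm : m ≤ l), q ⟨m, Nat.lt_succ_of_le hm⟩ = u m :=
  forced M h01 hP1 hl q hq u hu

lemma walk_determined (h01 : ∀ i j, M i j = 0 ∨ M i j = 1)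
    (hP1 : ∀ i : Fin b, (∃ j, M j i ≠ 0) → ∃ j, M i j ≠ 0)
    (hu : ∀ i : Fin b, (∃ k : ℕ, 0 < k ∧ 1 ≤ (M ^ k) i i) →
      ∃! w : ℕ → Fin b, (∀ k, M (w k) (w (k + 1)) = 1) ∧ w 0 = i)
    {n : ℕ} (p q : Fin (n+1) → Fin b)
    (hp : ∀ k : Fin n, M (p k.castSucc) (p k.succ) = 1)
    (hq : ∀ k : Fin n, M (q k.castSucc) (q k.succ) = 1)
    (sv tv : ℕ) (hst : sv < tv) (htn : tv ≤ n)
    (hvv : p ⟨sv, by omega⟩ = p ⟨tv, by omega⟩)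
    (hagree : ∀ m (hm : m ≤ tv), p ⟨m, by omega⟩ = q ⟨m, by omega⟩) :
    ∀ m (hm : m ≤ n), p ⟨m, by omega⟩ = q ⟨m, by omega⟩ := by
  have hD : ∃ k0 : ℕ, 0 < k0 ∧ 1 ≤ (M ^ k0) (p ⟨sv, by omega⟩) (p ⟨sv, by omega⟩) := by
    refine ⟨tv - sv, by omega, ?_⟩
    rw [pow_apply_eq_card' M h01]
    refine Finset.card_pos.mpr ⟨fun mm : Fin (tv - sv + 1) => p ⟨sv + mm.val, by omega⟩, ?_⟩
    simp only [mem_filter, mem_univ, true_and]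
    refine ⟨congrArg p (Fin.ext (by simp)), ?_, ?_⟩
    · have e2 : (⟨sv + (Fin.last (tv - sv)).val, by omega⟩ : Fin (n+1))
          = ⟨tv, by omega⟩ := Fin.ext (by simp [Fin.last]; omega)
      show p ⟨sv + (Fin.last (tv - sv)).val, by omega⟩ = p ⟨sv, by omega⟩
      rw [e2]
      exact hvv.symm
    · intro mm
      have h3 := hp ⟨sv + mm.val, by omega⟩
      simpa [Fin.castSucc_mk, Fin.succ_mk, Nat.add_assoc] using h3
  obtain ⟨uN, ⟨huN_adm, huN0⟩, huu⟩ := hu _ hD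
  have hforce : ∀ (rr : Fin (n - sv + 1) → Fin b),
      rr 0 = p ⟨sv, by omega⟩ →
      (∀ kk : Fin (n - sv), M (rr kk.castSucc) (rr kk.succ) = 1) →
      ∀ mm (hmm : mm ≤ n - sv), rr ⟨mm, Nat.lt_succ_of_le hmm⟩ = uN mm := by
    intro rr hrr0 hrre
    refine forced' M h01 hP1 (by omega) rr hrre uN ?_
    intro w hw
    exact huu w ⟨hw.1, by rw [hw.2, hrr0]⟩
  have hsegp : ∀ mm (hmm : mm ≤ n - sv), p ⟨sv + mm, by omega⟩ = uN mm :=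
    fun mm hmm => hforce (fun mm => p ⟨sv + mm.val, by omega⟩)
      (congrArg p (Fin.ext (by simp)))
      (fun kk => by
        have h3 := hp ⟨sv + kk.val, by omega⟩
        simpa [Fin.castSucc_mk, Fin.succ_mk, Nat.add_assoc] using h3) mm hmm
  have hsegq : ∀ mm (hmm : mm ≤ n - sv), q ⟨sv + mm, by omega⟩ = uN mm :=
    fun mm hmm => hforce (fun mm => q ⟨sv + mm.val, by omega⟩)
      (by
        have h4 := hagree sv (by omega)
        exact (congrArg q (Fin.ext (by simp))).trans h4.symm)
      (fun kk => by
        have h3 := hq ⟨sv + kk.val, by omega⟩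
        simpa [Fin.castSucc_mk, Fin.succ_mk, Nat.add_assoc] using h3) mm hmm
  intro m hm
  by_cases hmt : m ≤ tv
  · exact hagree m hmt
  · have ep : (⟨m, by omega⟩ : Fin (n+1)) = ⟨sv + (m - sv), by omega⟩ :=
      Fin.ext (by simp; omega)
    have h4 := hsegp (m - sv) (Nat.sub_le_sub_right hm sv)
    have h5 := hsegq (m - sv) (Nat.sub_le_sub_right hm sv)
    exact (congrArg p ep).trans (h4.trans (h5.symm.trans (congrArg q ep).symm))
lemma bounded_to_unique (h01 : ∀ i j, M i j = 0 ∨ M i j = 1)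
    (hb : ∃ C : ℕ, ∀ n : ℕ, 0 < n → (∑ i, ∑ j, (M ^ n) i j) ≤ C) :
    ∀ i : Fin b, (∃ k : ℕ, 0 < k ∧ 1 ≤ (M ^ k) i i) →
      ∃! w : ℕ → Fin b, (∀ k, M (w k) (w (k + 1)) = 1) ∧ w 0 = i := by
  classical
  obtain ⟨C, hC⟩ := hb
  rintro i ⟨k, hk, hki⟩
  rw [pow_apply_eq_card' M h01] at hki
  obtain ⟨r, hr⟩ := card_pos.mp hki
  clear hki
  simp only [mem_filter, mem_univ, true_and] at hr
  obtain ⟨hr0, hrl, hrw⟩ := hr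
  set u : ℕ → Fin b := fun m => r ⟨m % k, Nat.lt_succ_of_lt (Nat.mod_lt m hk)⟩ with hu_def
  clear_value u
  have hup : ∀ s m, u (s * k + m) = u m := by
    intro s m
    rw [hu_def]
    exact congrArg r (Fin.ext (by simp only []; rw [Nat.add_comm, Nat.add_mul_mod_self_right]))
  have hu0 : u 0 = i := by
    rw [hu_def]
    simp only
    rw [← hr0]
    exact congrArg r (Fin.ext (by simp))
  have hedge : ∀ a (ha : a < k),
      M (r ⟨a, Nat.lt_succ_of_lt ha⟩) (r ⟨a + 1, Nat.succ_lt_succ ha⟩) = 1 := by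
    intro a ha
    have := hrw ⟨a, ha⟩
    simpa [Fin.castSucc_mk, Fin.succ_mk] using this
  have hu_adm : ∀ m, M (u m) (u (m + 1)) = 1 := by
    intro m
    have hmk : m % k < k := Nat.mod_lt m hk
    have hmod : (m % k + 1) % k = (m + 1) % k := Nat.mod_add_mod m k 1
    by_cases h : m % k + 1 < k
    · have h2 : (m + 1) % k = m % k + 1 := by rw [← hmod, Nat.mod_eq_of_lt h]
      have e1 : u (m + 1) = r ⟨m % k + 1, by omega⟩ := by
        rw [hu_def]
        exact congrArg r (Fin.ext (by simp [h2]))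
      have e5 : u m = r ⟨m % k, by omega⟩ := by
        rw [hu_def]
      rw [e1, e5]
      exact hedge (m % k) (by omega)
    · have hk2 : m % k + 1 = k := by omega
      have hk0 : (m + 1) % k = 0 := by rw [← hmod, hk2, Nat.mod_self]
      have e1 : u (m + 1) = r ⟨0, by omega⟩ := by
        rw [hu_def]
        exact congrArg r (Fin.ext (by simp [hk0]))
      have e2 : r ⟨0, by omega⟩ = i := by
        rw [← hr0]
        exact congrArg r (Fin.ext (by simp))
      have e3 : r ⟨m % k + 1, by omega⟩ = i := by
        rw [← hrl]
        exact congrArg r (Fin.ext (by simp [Fin.last, hk2]))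
      have e5 : u m = r ⟨m % k, by omega⟩ := by rw [hu_def]
      rw [e1, e2, ← e3, e5]
      exact hedge (m % k) (by omega)
  refine ⟨u, ⟨hu_adm, hu0⟩, ?_⟩
  intro w hw
  obtain ⟨hw_adm, hw0⟩ := hw
  by_contra hne
  have hex : ∃ t, w t ≠ u t := by
    by_contra hc
    push_neg at hc
    exact hne (funext hc)
  set t := Nat.find hex with ht_def
  have ht : w t ≠ u t := Nat.find_spec hex
  have htmin : ∀ m, m < t → w m = u m := fun m hm => not_not.mp (Nat.find_min hex hm)
  clear_value t
  set S := C + 1 with hS_def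
  set n := S * k + t with hn_def
  set v : ℕ → ℕ → Fin b := fun s m => if m < s * k then u m else w (m - s * k) with hv_def
  clear_value v
  have hv_eq_u : ∀ s m, m < s * k + t → v s m = u m := by
    intro s m hm
    by_cases h : m < s * k
    · rw [hv_def]
      simp only
      rw [if_pos h]
    · rw [hv_def]
      simp only
      rw [if_neg h]
      have hj : m - s * k < t := by omega
      rw [htmin _ hj]
      have h2 := hup s (m - s * k)
      rw [Nat.add_sub_cancel' (le_of_not_gt h)] at h2
      exact h2.symm
  have hv_at : ∀ s, v s (s * k + t) = w t := by
    intro s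
    rw [hv_def]
    simp only
    rw [if_neg (by omega)]
    exact congrArg w (Nat.add_sub_cancel_left (s * k) t)
  have hv_adm : ∀ s m, M (v s m) (v s (m + 1)) = 1 := by
    intro s m
    by_cases h1 : m + 1 < s * k
    · rw [hv_def]
      simp only
      rw [if_pos (by omega), if_pos h1]
      exact hu_adm m
    · by_cases h2 : m < s * k
      · rw [hv_def]
        simp only
        rw [if_pos h2, if_neg (by omega)]
        have h3 : m + 1 - s * k = 0 := by omega
        rw [h3, hw0]
        have h6 := hu_adm m
        have h4 : u (m + 1) = i := by
          have h5 : m + 1 = s * k := by omega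
          rw [h5]
          have h7 := hup s 0
          rw [Nat.add_zero] at h7
          rw [h7, hu0]
        rw [h4] at h6
        exact h6
      · rw [hv_def]
        simp only
        rw [if_neg h2, if_neg (by omega)]
        have h3 : m + 1 - s * k = (m - s * k) + 1 := by omega
        rw [h3]
        exact hw_adm (m - s * k)
  have hmap : ∀ s : ℕ, (fun x : Fin (n+1) => v s x.val) ∈
      (univ.filter (fun p : Fin (n+1) → Fin b =>
        ∀ kk : Fin n, M (p kk.castSucc) (p kk.succ) = 1)) := by
    intro s
    simp only [mem_filter, mem_univ, true_and]
    intro kk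
    have := hv_adm s kk.val
    simpa [Fin.coe_castSucc, Fin.val_succ] using this
  have hinj : ∀ s s', s < s' → s' < S →
      (fun x : Fin (n+1) => v s x.val) ≠ (fun x : Fin (n+1) => v s' x.val) := by
    intro s s' hss hs' heq
    have h1 : s * k ≤ S * k := Nat.mul_le_mul_right k (by omega)
    have h2 : s * k < s' * k := (Nat.mul_lt_mul_right hk).mpr hss
    have hle : s * k + t ≤ n := by rw [hn_def]; omega
    have h3 := congrFun heq ⟨s * k + t, by omega⟩
    simp only at h3
    rw [hv_at s, hv_eq_u s' (s * k + t) (by omega), hup s t] at h3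
    exact ht h3
  have hn_pos : 0 < n := by
    have : k ≤ S * k := Nat.le_mul_of_pos_left k (by omega)
    rw [hn_def]
    omega
  have hcard : S ≤ (univ.filter (fun p : Fin (n+1) → Fin b =>
        ∀ kk : Fin n, M (p kk.castSucc) (p kk.succ) = 1)).card := by
    rw [← card_range S]
    apply Finset.card_le_card_of_injOn (fun s : ℕ => (fun x : Fin (n+1) => v s x.val))
    · exact fun s _ => hmap s
    · intro s hs s' hs' heq
      simp only [coe_range, Set.mem_Iio] at hs hs'
      by_contra hne'
      rcases Nat.lt_or_ge s s' with h | h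
      · exact hinj s s' h hs' heq
      · exact hinj s' s (by omega) hs heq.symm
  have hle := hC n hn_pos
  rw [sum_pow_eq_card' M h01 n] at hle
  have hfinal : S ≤ C := le_trans hcard hle
  rw [hS_def] at hfinal
  exact Nat.not_succ_le_self C hfinal

lemma unique_to_bounded (h01 : ∀ i j, M i j = 0 ∨ M i j = 1)
    (hP1 : ∀ i : Fin b, (∃ j, M j i ≠ 0) → ∃ j, M i j ≠ 0)
    (hu : ∀ i : Fin b, (∃ k : ℕ, 0 < k ∧ 1 ≤ (M ^ k) i i) →
      ∃! w : ℕ → Fin b, (∀ k, M (w k) (w (k + 1)) = 1) ∧ w 0 = i) :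
    ∃ C : ℕ, ∀ n : ℕ, 0 < n → (∑ i, ∑ j, (M ^ n) i j) ≤ C := by
  classical
  refine ⟨b ^ (b + 1), fun n hn => ?_⟩
  rw [sum_pow_eq_card' M h01 n]
  have hcard : (univ.filter (fun p : Fin (n+1) → Fin b =>
        ∀ k : Fin n, M (p k.castSucc) (p k.succ) = 1)).card
      ≤ (univ : Finset (Fin (b+1) → Fin b)).card := by
    apply card_le_card_of_injOn
      (fun p => fun tt : Fin (b+1) => p ⟨min tt.val n, Nat.lt_succ_of_le (min_le_right _ _)⟩)
    · exact fun p _ => mem_univ _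
    · intro p hp q hq hpq
      simp only [coe_filter, Set.mem_setOf_eq, mem_univ, true_and] at hp hq
      have hagree : ∀ m (hmb : m ≤ b) (hmn : m ≤ n),
          p ⟨m, Nat.lt_succ_of_le hmn⟩ = q ⟨m, Nat.lt_succ_of_le hmn⟩ := by
        intro m hmb hmn
        have h1 := congrFun hpq ⟨m, Nat.lt_succ_of_le hmb⟩
        simp only at h1
        have e1 : (⟨min m n, Nat.lt_succ_of_le (min_le_right _ _)⟩ : Fin (n+1))
            = ⟨m, Nat.lt_succ_of_le hmn⟩ := Fin.ext (by simp [min_eq_left hmn])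
        rw [e1] at h1
        exact h1
      by_cases hbn : n ≤ b
      · funext x
        obtain ⟨m, hm⟩ := x
        exact hagree m (by omega) (by omega)
      · obtain ⟨x1, y1, hxy, hpe⟩ := Fintype.exists_ne_map_eq_of_card_lt
          (fun tt : Fin (b+1) => p ⟨tt.val, by omega⟩) (by simp)
        have key : ∀ (sv tv : ℕ) (hst : sv < tv) (htb : tv ≤ b),
            p ⟨sv, by omega⟩ = p ⟨tv, by omega⟩ → p = q := by
          intro sv tv hst htb hvv
          have hall := walk_determined M h01 hP1 hu p q hp hq sv tv hst (by omega) hvv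
            (fun m hm => hagree m (by omega) (by omega))
          funext x
          obtain ⟨m, hm⟩ := x
          exact hall m (by omega)
        rcases lt_or_gt_of_ne hxy with h | h
        · exact key x1.val y1.val h (by omega) hpe
        · exact key y1.val x1.val h (by omega) hpe.symm
  calc (univ.filter (fun p : Fin (n+1) → Fin b =>
        ∀ k : Fin n, M (p k.castSucc) (p k.succ) = 1)).card
      ≤ (univ : Finset (Fin (b+1) → Fin b)).card := hcard
    _ = b ^ (b + 1) := by rw [card_univ]; simp

end BoundedIffUnique

/-- For M satisfying P1 and P2, the sequence ‖M^n‖ is bounded iff for each i ∈ D_M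
    there is exactly one infinite M-admissible word of head i. -/
theorem bounded_iff_unique (b : ℕ) (M : Matrix (Fin b) (Fin b) ℕ)
    (h01 : ∀ i j, M i j = 0 ∨ M i j = 1)
    (hP1 : ∀ i : Fin b, (∃ j, M j i ≠ 0) → ∃ j, M i j ≠ 0)
    (hP2 : ∀ (i : Fin b) (k : ℕ), 0 < k → (M ^ k) i i ≤ 1) :
    (∃ C : ℕ, ∀ n : ℕ, 0 < n → (∑ i, ∑ j, (M ^ n) i j) ≤ C) ↔
    ∀ i : Fin b, (∃ k : ℕ, 0 < k ∧ 1 ≤ (M ^ k) i i) →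
      ∃! w : ℕ → Fin b, (∀ k, M (w k) (w (k + 1)) = 1) ∧ w 0 = i :=
  ⟨fun hb => BoundedIffUnique.bounded_to_unique M h01 hb,
   fun hu => BoundedIffUnique.unique_to_bounded M h01 hP1 hu⟩
end

section
/- Let b ≥ 2 and let M be a b×b {0,1}-matrix satisfying conditions P1 and P2. If the sequence ‖M^n‖ (n ≥ 1) is unbounded, then ‖M^n‖ ≥ n+2 for all positive integers n; moreover ‖M^n‖ ≤ C(n+b, n+1) for all n. -/
open Finset

namespace UGaux

variable {b : ℕ} (M : Matrix (Fin b) (Fin b) ℕ)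

/-- walk condition on naturals -/
def IsWalk (n : ℕ) (w : ℕ → Fin b) : Prop := ∀ t, t < n → M (w t) (w (t+1)) = 1

def wSet (n : ℕ) : Finset (Fin (n+1) → Fin b) :=
  Finset.univ.filter (fun w => ∀ t : Fin n, M (w t.castSucc) (w t.succ) = 1)

def wBtw (n : ℕ) (i j : Fin b) : Finset (Fin (n+1) → Fin b) :=
  (wSet M n).filter (fun w => w 0 = i ∧ w (Fin.last n) = j)

lemma mem_wSet {n : ℕ} {w : Fin (n+1) → Fin b} :
    w ∈ wSet M n ↔ ∀ t : Fin n, M (w t.castSucc) (w t.succ) = 1 := by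
  simp [wSet]

variable (h01 : ∀ i j, M i j = 0 ∨ M i j = 1)

include h01 in
lemma card_wBtw (n : ℕ) (i j : Fin b) : (M ^ n) i j = (wBtw M n i j).card := by
  induction n generalizing j with
  | zero =>
    rcases eq_or_ne i j with h | h
    · subst h
      have : wBtw M 0 i i = {fun _ => i} := by
        ext w
        simp only [wBtw, wSet, Finset.mem_filter, Finset.mem_univ, true_and,
          Finset.mem_singleton]
        constructor
        · rintro ⟨-, h0, -⟩
          funext t
          have : t = 0 := Fin.fin_one_eq_zero t
          rw [this, h0]
        · rintro rfl
          refine ⟨fun t => t.elim0, rfl, rfl⟩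
      rw [this]
      simp [Matrix.one_apply]
    · have : wBtw M 0 i j = ∅ := by
        ext w
        simp only [wBtw, wSet, Finset.mem_filter, Finset.notMem_empty, iff_false]
        rintro ⟨-, h0, hl⟩
        exact h (h0 ▸ hl ▸ (by norm_num [Fin.last] : (0 : Fin 1) = Fin.last 0) ▸ rfl)
      rw [this]
      simp [Matrix.one_apply, h]
  | succ n ih =>
    rw [pow_succ, Matrix.mul_apply]
    have hfib : (wBtw M (n+1) i j).card
        = ∑ k, ((wBtw M (n+1) i j).filter (fun w => w (Fin.castSucc (Fin.last n)) = k)).card :=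
      Finset.card_eq_sum_card_fiberwise (fun w _ => Finset.mem_univ _)
    rw [hfib]
    refine Finset.sum_congr rfl (fun k _ => ?_)
    rcases h01 k j with hkj | hkj
    · rw [hkj, mul_zero, eq_comm, Finset.card_eq_zero, Finset.eq_empty_iff_forall_notMem]
      intro w hw
      simp only [Finset.mem_filter, wBtw, mem_wSet] at hw
      obtain ⟨⟨hwalk, h0, hl⟩, hk⟩ := hw
      have := hwalk (Fin.last n)
      rw [Fin.succ_last, hk, hl, hkj] at this
      exact zero_ne_one this
    · rw [hkj, mul_one, ih k]
      refine Finset.card_bij'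
        (fun (u : Fin (n+1) → Fin b) _ => (Fin.snoc u j : Fin (n+2) → Fin b))
        (fun (w : Fin (n+2) → Fin b) _ => (fun t => w t.castSucc : Fin (n+1) → Fin b))
        ?_ ?_ ?_ ?_
      · -- snoc maps wBtw n i k into the fiber
        intro u hu
        simp only [Finset.mem_filter, wBtw, mem_wSet] at hu ⊢
        obtain ⟨hwalk, h0, hl⟩ := hu
        refine ⟨⟨fun t => ?_, ?_, ?_⟩, ?_⟩
        · induction t using Fin.lastCases with
          | last =>
            rw [Fin.succ_last, Fin.snoc_last, Fin.snoc_castSucc, hl, hkj]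
          | cast s =>
            rw [Fin.succ_castSucc, Fin.snoc_castSucc, Fin.snoc_castSucc]
            exact hwalk s
        · rw [show (0 : Fin (n+2)) = Fin.castSucc 0 by simp, Fin.snoc_castSucc]
          exact h0
        · rw [Fin.snoc_last]
        · rw [Fin.snoc_castSucc]
          exact hl
      · -- restriction maps the fiber into wBtw n i k
        intro w hw
        simp only [Finset.mem_filter, wBtw, mem_wSet] at hw ⊢
        obtain ⟨⟨hwalk, h0, hl⟩, hk⟩ := hw
        refine ⟨fun t => ?_, ?_, ?_⟩
        · have := hwalk t.castSucc
          rwa [Fin.succ_castSucc] at this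
        · simpa [Fin.castSucc_zero] using h0
        · exact hk
      · intro u hu
        funext t
        simp only [Fin.snoc_castSucc]
      · intro w hw
        simp only [Finset.mem_filter, wBtw, mem_wSet] at hw
        obtain ⟨⟨hwalk, h0, hl⟩, hk⟩ := hw
        funext t
        induction t using Fin.lastCases with
        | last => simp only [Fin.snoc_last]; rw [hl]
        | cast s => simp only [Fin.snoc_castSucc]

include h01 in
lemma sum_entries (n : ℕ) : (∑ i, ∑ j, (M ^ n) i j) = (wSet M n).card := by
  have h : (wSet M n).card
      = ∑ p : Fin b × Fin b, ((wSet M n).filter (fun w => (w 0, w (Fin.last n)) = p)).card :=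
    Finset.card_eq_sum_card_fiberwise (fun w _ => Finset.mem_univ _)
  rw [h, Fintype.sum_prod_type]
  refine Finset.sum_congr rfl fun i _ => Finset.sum_congr rfl fun j _ => ?_
  rw [card_wBtw M h01 n i j]
  congr 1
  ext w
  simp [wBtw, Prod.ext_iff]

/-! ### walk operations on ℕ-indexed walks -/

def cat (a : ℕ) (w w' : ℕ → Fin b) : ℕ → Fin b := fun t => if t ≤ a then w t else w' (t - a)

lemma cat_isWalk {a c : ℕ} {w w' : ℕ → Fin b} (ha : IsWalk M a w) (hc : IsWalk M c w')
    (hj : w' 0 = w a) : IsWalk M (a + c) (cat a w w') := by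
  intro t ht
  simp only [cat]
  rcases le_or_gt (t+1) a with h2 | h2
  · rw [if_pos (by omega : t ≤ a), if_pos h2]
    exact ha t (by omega)
  · rcases le_or_gt t a with h1 | h1
    · have hta : t = a := by omega
      subst hta
      rw [if_pos h1, if_neg (by omega), (by omega : t + 1 - t = 1), ← hj]
      exact hc 0 (by omega)
    · rw [if_neg (by omega), if_neg (by omega), (by omega : t + 1 - a = (t - a) + 1)]
      exact hc (t - a) (by omega)

lemma cat_left {a : ℕ} {w w' : ℕ → Fin b} {t : ℕ} (h : t ≤ a) : cat a w w' t = w t :=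
  if_pos h

lemma cat_end {a c : ℕ} {w w' : ℕ → Fin b} (hj : w' 0 = w a) : cat a w w' (a + c) = w' c := by
  rcases Nat.eq_zero_or_pos c with rfl | hc
  · simpa [cat] using hj.symm
  · simp only [cat, if_neg (by omega : ¬ a + c ≤ a)]
    congr 1
    omega

def seg (s : ℕ) (w : ℕ → Fin b) : ℕ → Fin b := fun t => w (s + t)

lemma seg_isWalk {n s m : ℕ} {w : ℕ → Fin b} (hw : IsWalk M n w) (h : s + m ≤ n) :
    IsWalk M m (seg s w) := by
  intro t ht
  show M (w (s + t)) (w (s + (t + 1))) = 1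
  rw [(by omega : s + (t + 1) = (s + t) + 1)]
  exact hw (s + t) (by omega)

def rot (r k : ℕ) (w : ℕ → Fin b) : ℕ → Fin b :=
  fun t => if r + t ≤ k then w (r + t) else w (r + t - k)

lemma rot_isWalk {k r : ℕ} {w : ℕ → Fin b} (hw : IsWalk M k w) (h0 : w k = w 0)
    (hr : r ≤ k) : IsWalk M k (rot r k w) := by
  intro t ht
  simp only [rot]
  rcases lt_trichotomy (r + t) k with h | h | h
  · rw [if_pos (by omega), if_pos (by omega), (by omega : r + (t+1) = r + t + 1)]
    exact hw (r + t) h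
  · rw [if_pos (by omega), if_neg (by omega), (by omega : r + (t+1) - k = 1), h, h0]
    exact hw 0 (by omega)
  · rw [if_neg (by omega), if_neg (by omega), (by omega : r + (t+1) - k = (r + t - k) + 1)]
    exact hw (r + t - k) (by omega)

lemma rot_zero {k r : ℕ} {w : ℕ → Fin b} (hr : r ≤ k) : rot r k w 0 = w r := by
  simp only [rot]
  rw [Nat.add_zero, if_pos hr]

lemma rot_end {k r : ℕ} {w : ℕ → Fin b} (h0 : w k = w 0) (hr : r ≤ k) :
    rot r k w k = w r := by
  rcases Nat.eq_zero_or_pos r with rfl | hrp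
  · simpa [rot] using h0
  · simp only [rot, if_neg (by omega : ¬ r + k ≤ k), (by omega : r + k - k = r)]

lemma rot_one {k r : ℕ} {w : ℕ → Fin b} (hr : r + 1 ≤ k) : rot r k w 1 = w (r + 1) := by
  simp only [rot]
  rw [if_pos hr]

/-! ### cyclic vertices and the successor map -/

def Cyc (v : Fin b) : Prop :=
  ∃ p : (ℕ → Fin b) × ℕ, 0 < p.2 ∧ IsWalk M p.2 p.1 ∧ p.1 0 = v ∧ p.1 p.2 = v

open Classical in
noncomputable def cw (v : Fin b) : (ℕ → Fin b) × ℕ :=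
  if h : Cyc M v then h.choose else (fun _ => v, 0)

lemma cw_spec {v : Fin b} (h : Cyc M v) :
    0 < (cw M v).2 ∧ IsWalk M (cw M v).2 (cw M v).1 ∧ (cw M v).1 0 = v
      ∧ (cw M v).1 (cw M v).2 = v := by
  rw [cw, dif_pos h]
  exact h.choose_spec

noncomputable def sig (v : Fin b) : Fin b := (cw M v).1 1

lemma sig_of_not_cyc {v : Fin b} (h : ¬ Cyc M v) : sig M v = v := by
  rw [sig, cw, dif_neg h]

/-- restriction of an ℕ-walk to a `Fin`-walk -/
def res (n : ℕ) (w : ℕ → Fin b) : Fin (n+1) → Fin b := fun t => w t.1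

lemma res_mem_wSet {n : ℕ} {w : ℕ → Fin b} (hw : IsWalk M n w) : res n w ∈ wSet M n := by
  rw [mem_wSet]
  intro t
  exact hw t.1 t.2

variable (hP2 : ∀ (i : Fin b) (k : ℕ), 0 < k → (M ^ k) i i ≤ 1)

include h01 hP2 in
/-- any two closed walks based at `v` have the same second vertex -/
lemma second_unique {v : Fin b} {k k' : ℕ} {w w' : ℕ → Fin b}
    (hk : 0 < k) (hk' : 0 < k') (hw : IsWalk M k w) (hw' : IsWalk M k' w')
    (h0 : w 0 = v) (hl : w k = v) (h0' : w' 0 = v) (hl' : w' k' = v) :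
    w 1 = w' 1 := by
  by_contra hne
  have hcat : IsWalk M (k + k') (cat k w w') := cat_isWalk M hw hw' (by rw [h0', hl])
  have hcat' : IsWalk M (k' + k) (cat k' w' w) := cat_isWalk M hw' hw (by rw [h0, hl'])
  have m1 : res (k + k') (cat k w w') ∈ wBtw M (k + k') v v := by
    simp only [wBtw, Finset.mem_filter]
    refine ⟨res_mem_wSet M hcat, ?_, ?_⟩
    · simpa [res] using (cat_left (by omega : 0 ≤ k)).trans h0
    · show cat k w w' (k + k') = v
      rw [cat_end (by rw [h0', hl])]
      exact hl'
  have m2 : res (k + k') (cat k' w' w) ∈ wBtw M (k + k') v v := by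
    simp only [wBtw, Finset.mem_filter]
    have e : k + k' = k' + k := by omega
    refine ⟨?_, ?_, ?_⟩
    · rw [mem_wSet]
      intro t
      exact hcat' t.1 (by omega)
    · simpa [res] using (cat_left (by omega : 0 ≤ k')).trans h0'
    · show cat k' w' w (k + k') = v
      rw [e, cat_end (by rw [h0, hl'])]
      exact hl
  have hne2 : res (k + k') (cat k w w') ≠ res (k + k') (cat k' w' w) := by
    intro he
    have := congrFun he ⟨1, by omega⟩
    simp only [res] at this
    rw [cat_left (by omega : 1 ≤ k), cat_left (by omega : 1 ≤ k')] at this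
    exact hne this
  have h2 : 2 ≤ (wBtw M (k + k') v v).card :=
    Finset.one_lt_card.mpr ⟨_, m1, _, m2, hne2⟩
  have := hP2 v (k + k') (by omega)
  rw [card_wBtw M h01 (k + k') v v] at this
  omega

include h01 hP2 in
lemma sig_second {v : Fin b} {k : ℕ} {w : ℕ → Fin b}
    (hk : 0 < k) (hw : IsWalk M k w) (h0 : w 0 = v) (hl : w k = v) :
    w 1 = sig M v := by
  have hc : Cyc M v := ⟨(w, k), hk, hw, h0, hl⟩
  obtain ⟨c1, c2, c3, c4⟩ := cw_spec M hc
  exact second_unique M h01 hP2 hk c1 hw c2 h0 hl c3 c4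

include h01 hP2 in
/-- every closed walk follows `sig` -/
lemma closed_follows {v : Fin b} {k : ℕ} {w : ℕ → Fin b}
    (hk : 0 < k) (hw : IsWalk M k w) (h0 : w 0 = v) (hl : w k = v) :
    ∀ r, r < k → w (r + 1) = sig M (w r) := by
  intro r hr
  have hrk : r ≤ k := le_of_lt hr
  have hcl : w k = w 0 := by rw [h0, hl]
  have hrw : IsWalk M k (rot r k w) := rot_isWalk M hw hcl hrk
  have h1 : rot r k w 0 = w r := rot_zero hrk
  have h2 : rot r k w k = w r := rot_end hcl hrk
  have := sig_second M h01 hP2 hk hrw h1 h2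
  rwa [rot_one hr] at this

lemma cyc_of_rot {v : Fin b} {k : ℕ} {w : ℕ → Fin b}
    (hk : 0 < k) (hw : IsWalk M k w) (h0 : w 0 = v) (hl : w k = v) :
    ∀ r, r ≤ k → Cyc M (w r) := by
  intro r hr
  have hcl : w k = w 0 := by rw [h0, hl]
  exact ⟨(rot r k w, k), hk, rot_isWalk M hw hcl hr, rot_zero hr, rot_end hcl hr⟩

lemma edge_sig {v : Fin b} (h : Cyc M v) : M v (sig M v) = 1 := by
  obtain ⟨c1, c2, c3, c4⟩ := cw_spec M h
  have := c2 0 c1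
  rwa [c3] at this

lemma cyc_sig {v : Fin b} (h : Cyc M v) : Cyc M (sig M v) := by
  obtain ⟨c1, c2, c3, c4⟩ := cw_spec M h
  exact cyc_of_rot M c1 c2 c3 c4 1 c1


lemma cyc_iter {v : Fin b} (h : Cyc M v) : ∀ m, Cyc M ((sig M)^[m] v)
  | 0 => h
  | (m+1) => by
      rw [Function.iterate_succ_apply']
      exact cyc_sig M (cyc_iter h m)

include h01 hP2 in
lemma sig_period {v : Fin b} (h : Cyc M v) : ∃ c, 0 < c ∧ (sig M)^[c] v = v := by
  obtain ⟨c1, c2, c3, c4⟩ := cw_spec M h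
  refine ⟨(cw M v).2, c1, ?_⟩
  have key : ∀ t, t ≤ (cw M v).2 → (cw M v).1 t = (sig M)^[t] v := by
    intro t
    induction t with
    | zero => intro _; simpa using c3
    | succ t ih =>
      intro ht
      rw [Function.iterate_succ_apply', ← ih (by omega),
        closed_follows M h01 hP2 c1 c2 c3 c4 t (by omega)]
  rw [← key _ le_rfl, c4]

include h01 hP2 in
lemma sig_walk {v : Fin b} (h : Cyc M v) (n : ℕ) : IsWalk M n (fun t => (sig M)^[t] v) := by
  intro t _
  have hc := cyc_iter M h t
  have := edge_sig M hc
  rwa [← Function.iterate_succ_apply' (sig M) t v] at this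

/-! ### orbits and reachability -/

def Orb (v x : Fin b) : Prop := ∃ m, (sig M)^[m] v = x

def Reach (u v : Fin b) : Prop := ∃ p : (ℕ → Fin b) × ℕ, IsWalk M p.2 p.1 ∧ p.1 0 = u ∧ p.1 p.2 = v

lemma reach_refl (v : Fin b) : Reach M v v := ⟨(fun _ => v, 0), fun t ht => by omega, rfl, rfl⟩

lemma reach_trans {u v x : Fin b} (h1 : Reach M u v) (h2 : Reach M v x) : Reach M u x := by
  obtain ⟨⟨w1, k1⟩, hw1, h01', hl1⟩ := h1
  obtain ⟨⟨w2, k2⟩, hw2, h02, hl2⟩ := h2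
  dsimp only at hw1 h01' hl1 hw2 h02 hl2
  refine ⟨(cat k1 w1 w2, k1 + k2), ?_, ?_, ?_⟩
  · exact cat_isWalk M hw1 hw2 (by rw [h02, hl1])
  · show cat k1 w1 w2 0 = u
    rw [cat_left (Nat.zero_le k1)]
    exact h01'
  · show cat k1 w1 w2 (k1 + k2) = x
    rw [cat_end (by rw [h02, hl1])]
    exact hl2

lemma reach_of_walk {n : ℕ} {w : ℕ → Fin b} (hw : IsWalk M n w) {p q : ℕ}
    (hpq : p ≤ q) (hq : q ≤ n) : Reach M (w p) (w q) := by
  refine ⟨(seg p w, q - p), seg_isWalk M hw (by omega), rfl, ?_⟩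
  simp only [seg]
  congr 1
  omega

lemma orb_trans {u v x : Fin b} (h1 : Orb M u v) (h2 : Orb M v x) : Orb M u x := by
  obtain ⟨m1, rfl⟩ := h1
  obtain ⟨m2, rfl⟩ := h2
  exact ⟨m2 + m1, Function.iterate_add_apply _ m2 m1 u⟩

include h01 hP2 in
lemma orb_back {v x : Fin b} (h : Cyc M v) (ho : Orb M v x) : Orb M x v := by
  obtain ⟨m, rfl⟩ := ho
  obtain ⟨c, hc, hfix⟩ := sig_period M h01 hP2 h
  refine ⟨m * (c - 1), ?_⟩
  rw [← Function.iterate_add_apply]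
  have he : m * (c - 1) + m = c * m := by
    cases c with
    | zero => omega
    | succ c' => rw [Nat.succ_sub_one, Nat.succ_mul, Nat.mul_comm m c']
  rw [he, Function.iterate_mul]
  exact Function.iterate_fixed hfix m

include h01 hP2 in
lemma orb_cyc {v x : Fin b} (h : Cyc M v) (ho : Orb M v x) : Cyc M x := by
  obtain ⟨m, rfl⟩ := ho
  exact cyc_iter M h m

include h01 hP2 in
lemma orb_reach {v x : Fin b} (h : Cyc M v) (ho : Orb M v x) : Reach M v x := by
  obtain ⟨m, rfl⟩ := ho
  exact ⟨(fun t => (sig M)^[t] v, m), sig_walk M h01 hP2 h m, rfl, rfl⟩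

/-! ### deviations and entries -/

open Classical in
noncomputable def devsN (n : ℕ) (W : ℕ → Fin b) : Finset (Fin n) :=
  Finset.univ.filter (fun t => W (t.1+1) ≠ sig M (W t.1))

noncomputable def entL (n : ℕ) (W : ℕ → Fin b) : List (Fin b) :=
  W 0 :: ((devsN M n W).sort (· ≤ ·)).map (fun t => W (t.1+1))

lemma mem_devsN {n : ℕ} {W : ℕ → Fin b} {t : Fin n} :
    t ∈ devsN M n W ↔ W (t.1+1) ≠ sig M (W t.1) := by
  simp [devsN]

include h01 hP2 in
lemma no_dev_between {n : ℕ} {W : ℕ → Fin b} (hw : IsWalk M n W) {p q : ℕ}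
    (hpq : p < q) (hq : q ≤ n) (heq : W p = W q) :
    ∀ r, p ≤ r → r < q → W (r+1) = sig M (W r) := by
  intro r hr1 hr2
  have hseg : IsWalk M (q-p) (seg p W) := seg_isWalk M hw (by omega)
  have h0 : seg p W 0 = W p := by
    show W (p+0) = W p
    rw [Nat.add_zero]
  have hl : seg p W (q-p) = W p := by
    show W (p+(q-p)) = W p
    rw [(by omega : p+(q-p) = q)]
    exact heq.symm
  have key := closed_follows M h01 hP2 (by omega : 0 < q-p) hseg h0 hl (r-p) (by omega)
  simp only [seg] at key
  rwa [(by omega : p + (r - p + 1) = r + 1), (by omega : p + (r - p) = r)] at key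

/-- entry times of a walk of length `n` -/
def Ent (n : ℕ) (W : ℕ → Fin b) (p : ℕ) : Prop :=
  p ≤ n ∧ (p = 0 ∨ (0 < p ∧ W p ≠ sig M (W (p-1))))

include h01 hP2 in
lemma ent_ne {n : ℕ} {W : ℕ → Fin b} (hw : IsWalk M n W) {p q : ℕ}
    (hq : Ent M n W q) (hpq : p < q) (hpn : p ≤ n) : W p ≠ W q := by
  intro heq
  obtain ⟨hqn, hq0 | ⟨hqpos, hdev⟩⟩ := hq
  · omega
  · exact hdev (by
      have := no_dev_between M h01 hP2 hw hpq hqn heq (q-1) (by omega) (by omega)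
      rwa [(by omega : q - 1 + 1 = q)] at this)

include h01 hP2 in
lemma ent_not_reach {n : ℕ} {W : ℕ → Fin b} (hw : IsWalk M n W) {p q : ℕ}
    (hq : Ent M n W q) (hpq : p < q) (hpn : p ≤ n) : ¬ Reach M (W q) (W p) := by
  rintro ⟨⟨z, m⟩, hz, hz0, hzl⟩
  dsimp only at hz hz0 hzl
  obtain ⟨hqn, hq0 | ⟨hqpos, hdev⟩⟩ := hq
  · omega
  apply hdev
  have hseg : IsWalk M (q-p) (seg p W) := seg_isWalk M hw (by omega)
  have hjun : z 0 = seg p W (q-p) := by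
    rw [hz0]
    show _ = W (p + (q-p))
    rw [(by omega : p+(q-p) = q)]
  have hcat : IsWalk M ((q-p) + m) (cat (q-p) (seg p W) z) :=
    cat_isWalk M hseg hz hjun
  have hc0 : cat (q-p) (seg p W) z 0 = W p := by
    rw [cat_left (Nat.zero_le _)]
    show W (p+0) = W p
    rw [Nat.add_zero]
  have hcl : cat (q-p) (seg p W) z ((q-p) + m) = W p := by
    rw [cat_end hjun, hzl]
  have key := closed_follows M h01 hP2 (by omega : 0 < (q-p)+m) hcat hc0 hcl
    (q-1-p) (by omega)
  rw [cat_left (by omega : q-1-p+1 ≤ q-p), cat_left (by omega : q-1-p ≤ q-p)] at key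
  simp only [seg] at key
  rwa [(by omega : p + (q-1-p+1) = q), (by omega : p + (q-1-p) = q-1)] at key

/-- ordering relation used to sort entries -/
def rel (x y : Fin b) : Prop := x = y ∨ (Reach M x y ∧ ¬ Reach M y x)

instance : IsAntisymm (Fin b) (rel M) := by
  constructor
  rintro x y (rfl | ⟨h1, h2⟩) (h | ⟨h3, h4⟩)
  · rfl
  · rfl
  · exact h.symm
  · exact absurd h3 h2

lemma ent_of_dev {n : ℕ} {W : ℕ → Fin b} {d : Fin n} (hd : d ∈ devsN M n W) :
    Ent M n W (d.1 + 1) := by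
  rw [mem_devsN] at hd
  exact ⟨by omega, Or.inr ⟨by omega, by simpa using hd⟩⟩

include h01 hP2 in
lemma nodup_entL {n : ℕ} {W : ℕ → Fin b} (hw : IsWalk M n W) : (entL M n W).Nodup := by
  rw [entL, List.nodup_cons]
  constructor
  · intro hmem
    obtain ⟨d, hd, heq⟩ := List.mem_map.mp hmem
    rw [Finset.mem_sort] at hd
    exact ent_ne M h01 hP2 hw (ent_of_dev M hd) (by omega) (by omega) heq.symm
  · refine List.Nodup.map_on ?_ (Finset.sort_nodup _ _)
    intro x hx y hy hxy
    rw [Finset.mem_sort] at hx hy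
    rcases lt_trichotomy x.1 y.1 with h | h | h
    · exact absurd hxy (ent_ne M h01 hP2 hw (ent_of_dev M hy) (by omega) (by omega))
    · exact Fin.ext h
    · exact absurd hxy.symm (ent_ne M h01 hP2 hw (ent_of_dev M hx) (by omega) (by omega))

include h01 hP2 in
lemma sorted_entL {n : ℕ} {W : ℕ → Fin b} (hw : IsWalk M n W) :
    List.Pairwise (rel M) (entL M n W) := by
  rw [entL, List.pairwise_cons]
  constructor
  · intro y hy
    obtain ⟨d, hd, rfl⟩ := List.mem_map.mp hy
    rw [Finset.mem_sort] at hd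
    exact Or.inr ⟨reach_of_walk M hw (by omega) (by omega),
      ent_not_reach M h01 hP2 hw (ent_of_dev M hd) (by omega) (by omega)⟩
  · refine List.pairwise_map.mpr (List.Pairwise.imp_of_mem ?_ (Finset.sortedLT_sort _).pairwise)
    intro d1 d2 hd1 hd2 hR
    rw [Finset.mem_sort] at hd1 hd2
    have h12 : d1.1 < d2.1 := hR
    exact Or.inr ⟨reach_of_walk M hw (by omega) (by omega),
      ent_not_reach M h01 hP2 hw (ent_of_dev M hd2) (by omega) (by omega)⟩

include h01 hP2 in
lemma card_entL {n : ℕ} {W : ℕ → Fin b} (hw : IsWalk M n W) :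
    (entL M n W).toFinset.card = (devsN M n W).card + 1 := by
  rw [List.toFinset_card_of_nodup (nodup_entL M h01 hP2 hw), entL]
  simp [Finset.length_sort, Nat.add_comm]

include h01 hP2 in
lemma uniq_entL {n : ℕ} {W W' : ℕ → Fin b} (hw : IsWalk M n W) (hw' : IsWalk M n W')
    (h : (entL M n W).toFinset = (entL M n W').toFinset) : entL M n W = entL M n W' :=
  List.Perm.eq_of_pairwise'
    (sorted_entL M h01 hP2 hw) (sorted_entL M h01 hP2 hw')
    (List.perm_of_nodup_nodup_toFinset_eq (nodup_entL M h01 hP2 hw) (nodup_entL M h01 hP2 hw') h)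

lemma recon {n : ℕ} {W W' : ℕ → Fin b}
    (hD : devsN M n W = devsN M n W') (hL : entL M n W = entL M n W') :
    ∀ t, t ≤ n → W t = W' t := by
  have h0 : W 0 = W' 0 := by
    have := hL
    rw [entL, entL, List.cons.injEq] at this
    exact this.1
  have htail := by
    have := hL
    rw [entL, entL, List.cons.injEq] at this
    exact this.2
  rw [hD] at htail
  intro t
  induction t with
  | zero => intro _; exact h0
  | succ t ih =>
    intro ht
    have hWt := ih (by omega)
    by_cases hdev : (⟨t, by omega⟩ : Fin n) ∈ devsN M n W
    · have hmem : (⟨t, by omega⟩ : Fin n) ∈ (devsN M n W').sort (· ≤ ·) := by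
        rw [Finset.mem_sort, ← hD]
        exact hdev
      have := List.map_eq_map_iff.mp htail _ hmem
      simpa using this
    · have h1 : W (t+1) = sig M (W t) := by
        rw [mem_devsN] at hdev
        simpa using not_not.mp hdev
      have hdev' : ¬ (⟨t, by omega⟩ : Fin n) ∈ devsN M n W' := by
        rw [← hD]
        exact hdev
      have h2 : W' (t+1) = sig M (W' t) := by
        rw [mem_devsN] at hdev'
        simpa using not_not.mp hdev'
      rw [h1, h2, hWt]

/-! ### bridge between Fin-walks and ℕ-walks -/

def ex (n : ℕ) (w : Fin (n+1) → Fin b) : ℕ → Fin b := fun t => w ⟨min t n, by omega⟩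

lemma ex_eq {n : ℕ} {w : Fin (n+1) → Fin b} {t : ℕ} (h : t ≤ n) :
    ex n w t = w ⟨t, by omega⟩ := by
  unfold ex
  congr 1
  exact Fin.ext (by simp [Nat.min_eq_left h])

omit h01 in
lemma ex_isWalk {n : ℕ} {w : Fin (n+1) → Fin b} (hw : w ∈ wSet M n) : IsWalk M n (ex n w) := by
  intro t ht
  rw [ex_eq (by omega), ex_eq (by omega)]
  exact (mem_wSet M).mp hw ⟨t, ht⟩

noncomputable def Phi (n : ℕ) (w : Fin (n+1) → Fin b) : Finset (Fin b) × Finset (Fin n) :=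
  ((entL M n (ex n w)).toFinset, devsN M n (ex n w))

include h01 hP2 in
lemma Phi_inj {n : ℕ} : Set.InjOn (Phi M n) (wSet M n) := by
  intro w hw w' hw' h
  have hD : devsN M n (ex n w) = devsN M n (ex n w') := congrArg Prod.snd h
  have hE : (entL M n (ex n w)).toFinset = (entL M n (ex n w')).toFinset := congrArg Prod.fst h
  have hL := uniq_entL M h01 hP2 (ex_isWalk M hw) (ex_isWalk M hw') hE
  have key := recon M hD hL
  funext t
  have e1 : w t = ex n w t.1 := by
    rw [ex_eq (by omega)]
  have e2 : w' t = ex n w' t.1 := by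
    rw [ex_eq (by omega)]
  rw [e1, e2, key t.1 (by omega)]

/-! ### counting the codomain of Phi -/

lemma card_pairs (n : ℕ) :
    ((Finset.univ : Finset (Finset (Fin b) × Finset (Fin n))).filter
      (fun p => p.1.card = p.2.card + 1)).card = (n + b).choose (n + 1) := by
  classical
  set g : ℕ → ℕ := fun s => if s = 0 then 0 else n.choose (s - 1) with hg
  have step1 : ((Finset.univ : Finset (Finset (Fin b) × Finset (Fin n))).filter
      (fun p => p.1.card = p.2.card + 1)).card = ∑ A : Finset (Fin b), g A.card := by
    rw [Finset.card_eq_sum_card_fiberwise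
      (f := Prod.fst) (t := Finset.univ) (fun x _ => Finset.mem_univ _)]
    refine Finset.sum_congr rfl (fun A _ => ?_)
    have hset : ((Finset.univ : Finset (Finset (Fin b) × Finset (Fin n))).filter
        (fun p => p.1.card = p.2.card + 1)).filter (fun p => p.1 = A)
        = {A} ×ˢ (Finset.univ.filter (fun D : Finset (Fin n) => A.card = D.card + 1)) := by
      ext p
      simp only [Finset.mem_filter, Finset.mem_univ, true_and, Finset.mem_product,
        Finset.mem_singleton]
      constructor
      · rintro ⟨h1, rfl⟩
        exact ⟨rfl, h1⟩
      · rintro ⟨rfl, h2⟩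
        exact ⟨h2, rfl⟩
    rw [hset, Finset.card_product, Finset.card_singleton, one_mul]
    rcases Nat.eq_zero_or_pos A.card with hA | hA
    · have : (Finset.univ.filter (fun D : Finset (Fin n) => A.card = D.card + 1)) = ∅ := by
        rw [Finset.eq_empty_iff_forall_notMem]
        intro D hD
        rw [Finset.mem_filter] at hD
        omega
      rw [this, Finset.card_empty, hA]
      simp [hg]
    · have : (Finset.univ.filter (fun D : Finset (Fin n) => A.card = D.card + 1))
          = Finset.powersetCard (A.card - 1) Finset.univ := by
        ext D
        rw [Finset.mem_filter, Finset.mem_powersetCard]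
        constructor
        · rintro ⟨-, h⟩
          exact ⟨Finset.subset_univ _, by omega⟩
        · rintro ⟨-, h⟩
          exact ⟨Finset.mem_univ _, by omega⟩
      rw [this, Finset.card_powersetCard, Finset.card_univ, Fintype.card_fin]
      exact (if_neg (by omega) : g A.card = n.choose (A.card - 1)).symm
  rw [step1]
  have step4 : ∑ A : Finset (Fin b), g A.card
      = ∑ j ∈ Finset.range (b+1), b.choose j * g j := by
    have h1 : ∑ A : Finset (Fin b), g A.card
        = ∑ A ∈ (Finset.univ : Finset (Fin b)).powerset, g A.card := by
      rw [Finset.powerset_univ]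
    rw [h1, Finset.sum_powerset]
    rw [Finset.card_univ, Fintype.card_fin]
    refine Finset.sum_congr rfl (fun j _ => ?_)
    have hs : ∑ t ∈ Finset.powersetCard j (Finset.univ : Finset (Fin b)), g t.card
        = ∑ _t ∈ Finset.powersetCard j (Finset.univ : Finset (Fin b)), g j :=
      Finset.sum_congr rfl (fun t ht => by rw [(Finset.mem_powersetCard.mp ht).2])
    rw [hs, Finset.sum_const, Finset.card_powersetCard, Finset.card_univ, Fintype.card_fin,
      smul_eq_mul]
  rw [step4]
  -- Vandermonde
  have hv : (n + b).choose (n + 1)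
      = ∑ j ∈ Finset.range (n + 2), n.choose (n + 1 - j) * b.choose j := by
    rw [Nat.add_choose_eq, Finset.Nat.sum_antidiagonal_eq_sum_range_succ
      (fun i j => n.choose i * b.choose j) (n+1)]
    rw [← Finset.sum_range_reflect]
    refine Finset.sum_congr rfl (fun j hj => ?_)
    rw [Finset.mem_range] at hj
    rw [(by omega : n + 2 - 1 - j = n + 1 - j), (by omega : n + 1 - (n + 1 - j) = j)]
  rw [hv]
  have hterm : ∀ j ∈ Finset.range (n + 2),
      n.choose (n + 1 - j) * b.choose j = b.choose j * g j := by
    intro j hj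
    rw [Finset.mem_range] at hj
    rcases Nat.eq_zero_or_pos j with rfl | hjp
    · simp [hg, Nat.choose_eq_zero_of_lt (by omega : n < n + 1)]
    · have hgj : g j = n.choose (j - 1) := if_neg (by omega)
      rw [hgj, Nat.mul_comm]
      congr 1
      rw [(by omega : n + 1 - j = n - (j - 1))]
      exact Nat.choose_symm (by omega)
  rw [Finset.sum_congr rfl hterm]
  -- extend both sums to range (n + b + 2)
  have e1 : ∑ j ∈ Finset.range (b+1), b.choose j * g j
      = ∑ j ∈ Finset.range (n+b+2), b.choose j * g j := by
    refine Finset.sum_subset (Finset.range_subset_range.mpr (by omega)) ?_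
    intro j _ hj
    rw [Finset.mem_range, not_lt] at hj
    rw [Nat.choose_eq_zero_of_lt (by omega : b < j), Nat.zero_mul]
  have e2 : ∑ j ∈ Finset.range (n+2), b.choose j * g j
      = ∑ j ∈ Finset.range (n+b+2), b.choose j * g j := by
    refine Finset.sum_subset (Finset.range_subset_range.mpr (by omega)) ?_
    intro j _ hj
    rw [Finset.mem_range, not_lt] at hj
    have hgj : g j = n.choose (j - 1) := if_neg (by omega)
    rw [hgj, Nat.choose_eq_zero_of_lt (by omega : n < j - 1), Nat.mul_zero]
  rw [e1, ← e2]

include h01 hP2 in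
lemma upper_bound (n : ℕ) :
    (∑ i, ∑ j, (M ^ n) i j) ≤ (n + b).choose (n + 1) := by
  rw [sum_entries M h01 n, ← card_pairs (b := b) n]
  refine Finset.card_le_card_of_injOn (Phi M n) (fun w hw => ?_) (Phi_inj M h01 hP2)
  rw [Finset.mem_coe, Finset.mem_filter]
  exact ⟨Finset.mem_univ _, card_entL M h01 hP2 (ex_isWalk M hw)⟩

/-! ### walks with at most one cyclic entry -/

def BadW (n : ℕ) (W : ℕ → Fin b) : Prop :=
  ∃ p q, p < q ∧ Ent M n W p ∧ Ent M n W q ∧ Cyc M (W p) ∧ Cyc M (W q)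

include h01 hP2 in
lemma bad_gives_Q {n : ℕ} {W : ℕ → Fin b} (hw : IsWalk M n W) (hbad : BadW M n W) :
    ∃ u v, Cyc M u ∧ Cyc M v ∧ Reach M u v ∧ ¬ Reach M v u := by
  obtain ⟨p, q, hpq, hp, hq, hcp, hcq⟩ := hbad
  exact ⟨W p, W q, hcp, hcq, reach_of_walk M hw (by omega) hq.1,
    ent_not_reach M h01 hP2 hw hq hpq (by have := hq.1; omega)⟩

lemma cyc_of_nondev {n : ℕ} {W : ℕ → Fin b} (hw : IsWalk M n W) {t : ℕ} (ht : t < n)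
    (hnd : W (t+1) = sig M (W t)) : Cyc M (W t) := by
  by_cases h : Cyc M (W t)
  · exact h
  · rw [sig_of_not_cyc M h] at hnd
    have edge := hw t ht
    rw [hnd] at edge
    exact absurd ⟨((fun _ => W t : ℕ → Fin b), 1), one_pos,
      fun s hs => edge, rfl, rfl⟩ h

lemma ent_base {n : ℕ} {W : ℕ → Fin b} (hw : IsWalk M n W) :
    ∀ t, t ≤ n → ∃ p, p ≤ t ∧ Ent M n W p ∧
      ∀ r, p ≤ r → r < t → W (r+1) = sig M (W r) := by
  intro t
  induction t with
  | zero =>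
    intro _
    exact ⟨0, le_rfl, ⟨by omega, Or.inl rfl⟩, fun r hr1 hr2 => absurd hr2 (by omega)⟩
  | succ t ih =>
    intro ht
    by_cases hnd : W (t+1) = sig M (W t)
    · obtain ⟨p, hp1, hp2, hp3⟩ := ih (by omega)
      refine ⟨p, by omega, hp2, fun r hr1 hr2 => ?_⟩
      rcases (by omega : r < t ∨ r = t) with h | h
      · exact hp3 r hr1 h
      · rw [h]; exact hnd
    · refine ⟨t+1, le_rfl, ⟨by omega, Or.inr ⟨by omega, by simpa using hnd⟩⟩,
        fun r hr1 hr2 => absurd hr2 (by omega)⟩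

lemma contig {n : ℕ} {W : ℕ → Fin b} (hw : IsWalk M n W) (hg : ¬ BadW M n W)
    {t1 t2 : ℕ} (h12 : t1 ≤ t2) (h2n : t2 < n)
    (hnd1 : W (t1+1) = sig M (W t1)) (hnd2 : W (t2+1) = sig M (W t2)) :
    ∀ t, t1 ≤ t → t ≤ t2 → W (t+1) = sig M (W t) := by
  intro t ha hb
  by_contra hdev
  have hne1 : t1 < t := lt_of_le_of_ne ha (by rintro rfl; exact hdev hnd1)
  have hne2 : t < t2 := lt_of_le_of_ne hb (by rintro rfl; exact hdev hnd2)
  obtain ⟨p1, hp11, hp12, hp13⟩ := ent_base M hw t1 (by omega)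
  obtain ⟨p2, hp21, hp22, hp23⟩ := ent_base M hw t2 (by omega)
  have hcyc1 : Cyc M (W p1) := by
    rcases lt_or_eq_of_le hp11 with h | h
    · exact cyc_of_nondev M hw (by omega) (hp13 p1 le_rfl h)
    · rw [h]; exact cyc_of_nondev M hw (by omega) hnd1
  have hcyc2 : Cyc M (W p2) := by
    rcases lt_or_eq_of_le hp21 with h | h
    · exact cyc_of_nondev M hw (by omega) (hp23 p2 le_rfl h)
    · rw [h]; exact cyc_of_nondev M hw (by omega) hnd2
  have htp2 : t < p2 := by
    by_contra hcon
    exact hdev (hp23 t (by omega) hne2)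
  exact hg ⟨p1, p2, by omega, hp12, hp22, hcyc1, hcyc2⟩

open Classical in
noncomputable def pmN (n : ℕ) (W : ℕ → Fin b) : ℕ :=
  if h : ∃ t, t < n ∧ W (t+1) = sig M (W t) then Nat.find h else b + 1

open Classical in
noncomputable def qmN (n : ℕ) (W : ℕ → Fin b) : ℕ :=
  Nat.findGreatest (fun t => t < n ∧ W (t+1) = sig M (W t)) n

include h01 hP2 in
lemma card_devsN_le {n : ℕ} {W : ℕ → Fin b} (hw : IsWalk M n W) :
    (devsN M n W).card + 1 ≤ b := by
  rw [← card_entL M h01 hP2 hw]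
  calc (entL M n W).toFinset.card ≤ (Finset.univ : Finset (Fin b)).card :=
        Finset.card_le_univ _
    _ = b := by rw [Finset.card_univ, Fintype.card_fin]

include h01 hP2 in
lemma pmN_le {n : ℕ} {W : ℕ → Fin b} (hw : IsWalk M n W) : pmN M n W ≤ b + 1 := by
  classical
  rw [pmN]
  split_ifs with h
  · have hfind := Nat.find_spec h
    have hn : 0 < n := by omega
    have hle : (Finset.range (Nat.find h)).card ≤ (devsN M n W).card := by
      refine Finset.card_le_card_of_injOn
        (fun t => (⟨min t (n-1), by omega⟩ : Fin n)) ?_ ?_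
      · intro t htm
        rw [Finset.mem_coe, Finset.mem_range] at htm
        have hmin : min t (n-1) = t := by omega
        rw [Finset.mem_coe, mem_devsN]
        simp only [hmin]
        intro hc
        exact (Nat.find_min h htm) ⟨by omega, hc⟩
      · intro x hx y hy hxy
        rw [Finset.mem_coe, Finset.mem_range] at hx hy
        have := congrArg Fin.val hxy
        simp only at this
        omega
    rw [Finset.card_range] at hle
    have := card_devsN_le M h01 hP2 hw
    omega
  · omega

include h01 hP2 in
lemma qmN_ge {n : ℕ} {W : ℕ → Fin b} (hw : IsWalk M n W)
    (h : ∃ t, t < n ∧ W (t+1) = sig M (W t)) : n ≤ qmN M n W + b := by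
  classical
  have hq : qmN M n W ≤ n := Nat.findGreatest_le n
  obtain ⟨t0, ht0, _⟩ := h
  have hn : 0 < n := by omega
  have hle : (Finset.range (n - 1 - qmN M n W)).card ≤ (devsN M n W).card := by
    refine Finset.card_le_card_of_injOn
      (fun t => (⟨min (qmN M n W + 1 + t) (n-1), by omega⟩ : Fin n)) ?_ ?_
    · intro t htm
      rw [Finset.mem_coe, Finset.mem_range] at htm
      have hmin : min (qmN M n W + 1 + t) (n-1) = qmN M n W + 1 + t := by omega
      rw [Finset.mem_coe, mem_devsN]
      simp only [hmin]
      intro hc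
      have := Nat.findGreatest_is_greatest
        (P := fun t => t < n ∧ W (t+1) = sig M (W t))
        (by omega : qmN M n W < qmN M n W + 1 + t) (by omega)
      exact this ⟨by omega, hc⟩
    · intro x hx y hy hxy
      rw [Finset.mem_coe, Finset.mem_range] at hx hy
      have := congrArg Fin.val hxy
      simp only at this
      omega
  rw [Finset.card_range] at hle
  have := card_devsN_le M h01 hP2 hw
  omega

include h01 hP2 in
lemma dev_char {n : ℕ} {W : ℕ → Fin b} (hw : IsWalk M n W) (hg : ¬ BadW M n W)
    (h : ∃ t, t < n ∧ W (t+1) = sig M (W t)) (t : Fin n) :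
    (W (t.1+1) = sig M (W t.1)) ↔ (pmN M n W ≤ t.1 ∧ t.1 ≤ qmN M n W) := by
  classical
  have hpm : pmN M n W = Nat.find h := by rw [pmN, dif_pos h]
  constructor
  · intro hnd
    constructor
    · rw [hpm]
      exact Nat.find_le ⟨t.2, hnd⟩
    · exact Nat.le_findGreatest (by omega) ⟨t.2, hnd⟩
  · rintro ⟨h1, h2⟩
    rw [hpm] at h1
    have hfs := Nat.find_spec h
    have hqs : qmN M n W < n ∧ W (qmN M n W + 1) = sig M (W (qmN M n W)) :=
      Nat.findGreatest_spec (P := fun t => t < n ∧ W (t+1) = sig M (W t)) (n := n)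
        (m := Nat.find h) (by omega) hfs
    exact contig M hw hg (by omega : Nat.find h ≤ qmN M n W) hqs.1 hfs.2 hqs.2 t.1
      (by omega) h2

include h01 hP2 in
lemma pmN_genuine {n : ℕ} {W : ℕ → Fin b} (hw : IsWalk M n W)
    (h : ∃ t, t < n ∧ W (t+1) = sig M (W t)) : pmN M n W < b + 1 := by
  classical
  have hpm : pmN M n W = Nat.find h := by rw [pmN, dif_pos h]
  have hfind := Nat.find_spec h
  have hn : 0 < n := by omega
  have hle : (Finset.range (Nat.find h)).card ≤ (devsN M n W).card := by
    refine Finset.card_le_card_of_injOn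
      (fun t => (⟨min t (n-1), by omega⟩ : Fin n)) ?_ ?_
    · intro t htm
      rw [Finset.mem_coe, Finset.mem_range] at htm
      have hmin : min t (n-1) = t := by omega
      rw [Finset.mem_coe, mem_devsN]
      simp only [hmin]
      intro hc
      exact (Nat.find_min h htm) ⟨by omega, hc⟩
    · intro x hx y hy hxy
      rw [Finset.mem_coe, Finset.mem_range] at hx hy
      have := congrArg Fin.val hxy
      simp only at this
      omega
  rw [Finset.card_range] at hle
  have := card_devsN_le M h01 hP2 hw
  omega

open Classical in
noncomputable def GoodSet (n : ℕ) : Finset (Fin (n+1) → Fin b) :=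
  (wSet M n).filter (fun w => ¬ BadW M n (ex n w))

open Classical in
noncomputable def Psi (n : ℕ) (w : Fin (n+1) → Fin b) : Finset (Fin b) × ℕ × ℕ :=
  ((entL M n (ex n w)).toFinset, pmN M n (ex n w),
    if pmN M n (ex n w) = b + 1 then 0 else n - qmN M n (ex n w))

include h01 hP2 in
lemma card_goodSet (n : ℕ) : (GoodSet M n).card ≤ 2^b * ((b+2) * (b+2)) := by
  classical
  have hcard : (Finset.univ ×ˢ (Finset.range (b+2) ×ˢ Finset.range (b+2)) :
      Finset (Finset (Fin b) × ℕ × ℕ)).card = 2^b * ((b+2) * (b+2)) := by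
    rw [Finset.card_product, Finset.card_product, Finset.card_range, Finset.card_univ,
      Fintype.card_finset, Fintype.card_fin]
  rw [← hcard]
  refine Finset.card_le_card_of_injOn (Psi M n) ?_ ?_
  · intro w hw
    rw [Finset.mem_coe, GoodSet, Finset.mem_filter] at hw
    have hW := ex_isWalk M hw.1
    rw [Finset.mem_coe, Finset.mem_product, Finset.mem_product]
    refine ⟨Finset.mem_univ _, ?_, ?_⟩
    · rw [Finset.mem_range]
      have := pmN_le M h01 hP2 hW
      show pmN M n (ex n w) < b + 2
      omega
    · rw [Finset.mem_range]
      show (if pmN M n (ex n w) = b + 1 then 0 else n - qmN M n (ex n w)) < b + 2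
      split_ifs with hs
      · omega
      · have hex : ∃ t, t < n ∧ ex n w (t+1) = sig M (ex n w t) := by
          by_contra hcon
          exact hs (by rw [pmN, dif_neg hcon])
        have := qmN_ge M h01 hP2 hW hex
        omega
  · intro w hw w' hw' heq
    rw [Finset.mem_coe, GoodSet, Finset.mem_filter] at hw hw'
    obtain ⟨hw1, hw2⟩ := hw
    obtain ⟨hw1', hw2'⟩ := hw'
    have hWa := ex_isWalk M hw1
    have hWb := ex_isWalk M hw1'
    have hE : (entL M n (ex n w)).toFinset = (entL M n (ex n w')).toFinset :=
      congrArg Prod.fst heq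
    have hpm : pmN M n (ex n w) = pmN M n (ex n w') :=
      congrArg (fun p => p.2.1) heq
    have hr : (if pmN M n (ex n w) = b + 1 then 0 else n - qmN M n (ex n w))
        = (if pmN M n (ex n w') = b + 1 then 0 else n - qmN M n (ex n w')) :=
      congrArg (fun p => p.2.2) heq
    have hL := uniq_entL M h01 hP2 hWa hWb hE
    have hD : devsN M n (ex n w) = devsN M n (ex n w') := by
      by_cases hEx : ∃ t, t < n ∧ ex n w (t+1) = sig M (ex n w t)
      · have hEx' : ∃ t, t < n ∧ ex n w' (t+1) = sig M (ex n w' t) := by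
          by_contra hcon
          have : pmN M n (ex n w') = b + 1 := by rw [pmN, dif_neg hcon]
          have := pmN_genuine M h01 hP2 hWa hEx
          omega
        have hg1 := pmN_genuine M h01 hP2 hWa hEx
        have hg2 := pmN_genuine M h01 hP2 hWb hEx'
        rw [if_neg (by omega), if_neg (by omega)] at hr
        have hq1 : qmN M n (ex n w) < n := by
          classical
          obtain ⟨t0, ht0, hnd0⟩ := hEx
          exact (Nat.findGreatest_spec
            (P := fun t => t < n ∧ ex n w (t+1) = sig M (ex n w t)) (n := n)
            (m := t0) (by omega) ⟨ht0, hnd0⟩).1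
        have hq2 : qmN M n (ex n w') < n := by
          classical
          obtain ⟨t0, ht0, hnd0⟩ := hEx'
          exact (Nat.findGreatest_spec
            (P := fun t => t < n ∧ ex n w' (t+1) = sig M (ex n w' t)) (n := n)
            (m := t0) (by omega) ⟨ht0, hnd0⟩).1
        have hqm : qmN M n (ex n w) = qmN M n (ex n w') := by omega
        ext t
        rw [mem_devsN, mem_devsN]
        rw [not_iff_not.symm, not_not, not_not,
          dev_char M h01 hP2 hWa hw2 hEx t, dev_char M h01 hP2 hWb hw2' hEx' t,
          hpm, hqm]
      · have hEx' : ¬ ∃ t, t < n ∧ ex n w' (t+1) = sig M (ex n w' t) := by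
          intro hcon
          have h1 : pmN M n (ex n w) = b + 1 := by rw [pmN, dif_neg hEx]
          have := pmN_genuine M h01 hP2 hWb hcon
          omega
        push_neg at hEx hEx'
        ext t
        rw [mem_devsN, mem_devsN]
        constructor
        · intro _
          exact hEx' t.1 t.2
        · intro _
          exact hEx t.1 t.2
    have key := recon M hD hL
    funext t
    have e1 : w t = ex n w t.1 := by rw [ex_eq (by omega)]
    have e2 : w' t = ex n w' t.1 := by rw [ex_eq (by omega)]
    rw [e1, e2, key t.1 (by omega)]

include h01 hP2 in
lemma exists_config
    (hunb : ¬ ∃ C : ℕ, ∀ n : ℕ, 0 < n → (∑ i, ∑ j, (M ^ n) i j) ≤ C) :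
    ∃ u v, Cyc M u ∧ Cyc M v ∧ Reach M u v ∧ ¬ Reach M v u := by
  classical
  by_contra hno
  apply hunb
  refine ⟨2^b * ((b+2) * (b+2)), fun n hn => ?_⟩
  rw [sum_entries M h01 n]
  have hsub : wSet M n ⊆ GoodSet M n := by
    intro w hw
    rw [GoodSet, Finset.mem_filter]
    refine ⟨hw, fun hbad => ?_⟩
    exact hno (bad_gives_Q M h01 hP2 (ex_isWalk M hw) hbad)
  calc (wSet M n).card ≤ (GoodSet M n).card := Finset.card_le_card hsub
    _ ≤ 2^b * ((b+2) * (b+2)) := card_goodSet M h01 hP2 n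

/-! ### construction of n+2 walks -/

noncomputable def pvFun (P' : ℕ → Fin b) (L' : ℕ) (v : Fin b) : ℕ → Fin b :=
  fun m => if m ≤ L' then P' m else (sig M)^[m - L'] v

lemma pvFun_ge {P' : ℕ → Fin b} {L' : ℕ} {v : Fin b} (hP'L : P' L' = v) {m : ℕ}
    (hm : L' ≤ m) : pvFun M P' L' v m = (sig M)^[m - L'] v := by
  rcases eq_or_lt_of_le hm with h | h
  · show (if m ≤ L' then P' m else _) = _
    rw [if_pos (by omega : m ≤ L'), ← h, Nat.sub_self]
    exact hP'L
  · show (if m ≤ L' then P' m else _) = _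
    rw [if_neg (by omega)]

lemma pvFun_step {P' : ℕ → Fin b} {L' : ℕ} {v : Fin b} (hP'walk : IsWalk M L' P')
    (hP'L : P' L' = v) (hcv : Cyc M v) :
    ∀ m, M (pvFun M P' L' v m) (pvFun M P' L' v (m+1)) = 1 := by
  intro m
  rcases lt_or_ge m L' with h | h
  · show M (if m ≤ L' then P' m else _) (if m + 1 ≤ L' then P' (m+1) else _) = 1
    rw [if_pos (by omega : m ≤ L'), if_pos (by omega : m + 1 ≤ L')]
    exact hP'walk m h
  · rw [pvFun_ge M hP'L h, pvFun_ge M hP'L (by omega : L' ≤ m + 1),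
      (by omega : m + 1 - L' = (m - L') + 1), Function.iterate_succ_apply']
    exact edge_sig M (cyc_iter M hcv (m - L'))

lemma iter_unit {c : ℕ} {u' : Fin b} (hc : 0 < c) (hfix : (sig M)^[c] u' = u') (T : ℕ) :
    (sig M)^[T + T*(c-1)] u' = u' := by
  have he : T + T*(c-1) = c * T := by
    cases c with
    | zero => omega
    | succ c' =>
      rw [Nat.succ_sub_one, Nat.succ_mul, Nat.mul_comm T c']
      exact Nat.add_comm _ _
  rw [he, Function.iterate_mul]
  exact Function.iterate_fixed hfix T

noncomputable def xFun (T c : ℕ) (u' : Fin b) (Pv : ℕ → Fin b) : ℕ → Fin b :=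
  fun t => if t ≤ T then (sig M)^[t + T*(c-1)] u' else Pv (t - T)

lemma xFun_le {T c : ℕ} {u' : Fin b} {Pv : ℕ → Fin b} {t : ℕ} (h : t ≤ T) :
    xFun M T c u' Pv t = (sig M)^[t + T*(c-1)] u' := if_pos h

lemma xFun_T1 {T c : ℕ} {u' : Fin b} {Pv : ℕ → Fin b} :
    xFun M T c u' Pv (T+1) = Pv 1 := by
  show (if T + 1 ≤ T then _ else Pv (T + 1 - T)) = Pv 1
  rw [if_neg (by omega), (by omega : T + 1 - T = 1)]

lemma xFun_walk {T c : ℕ} {u' : Fin b} {Pv : ℕ → Fin b} (hc : 0 < c)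
    (hfix : (sig M)^[c] u' = u') (hcu' : Cyc M u')
    (hPvW : ∀ m, M (Pv m) (Pv (m+1)) = 1) (hedge : M u' (Pv 1) = 1) (n : ℕ) :
    IsWalk M n (xFun M T c u' Pv) := by
  intro t _
  rcases lt_trichotomy t T with h | h | h
  · rw [xFun_le M (by omega : t ≤ T), xFun_le M (by omega : t + 1 ≤ T),
      (by omega : t + 1 + T*(c-1) = (t + T*(c-1)) + 1), Function.iterate_succ_apply']
    exact edge_sig M (cyc_iter M hcu' _)
  · subst h
    rw [xFun_le M le_rfl, xFun_T1 M, iter_unit M hc hfix t]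
    exact hedge
  · show M (if t ≤ T then _ else Pv (t - T)) (if t + 1 ≤ T then _ else Pv (t + 1 - T)) = 1
    rw [if_neg (by omega), if_neg (by omega), (by omega : t + 1 - T = (t - T) + 1)]
    exact hPvW (t - T)

include h01 hP2 in
lemma many_walks {u v : Fin b} (hcu : Cyc M u) (hcv : Cyc M v)
    (hr : Reach M u v) (hnr : ¬ Reach M v u) (n : ℕ) :
    n + 2 ≤ (wSet M n).card := by
  classical
  obtain ⟨⟨P, L⟩, hP, hP0, hPL⟩ := hr
  dsimp only at hP hP0 hPL
  have horb0 : Orb M u (P 0) := by rw [hP0]; exact ⟨0, rfl⟩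
  obtain ⟨m0, hm0L, horb, hmax⟩ : ∃ m0, m0 ≤ L ∧ Orb M u (P m0) ∧
      ∀ k, m0 < k → k ≤ L → ¬ Orb M u (P k) := by
    haveI : DecidablePred (fun m => Orb M u (P m)) := Classical.decPred _
    have hfg : ∀ k, Nat.findGreatest (fun m => Orb M u (P m)) L < k → k ≤ L →
        ¬ Orb M u (P k) := fun k hk1 hk2 => Nat.findGreatest_is_greatest hk1 hk2
    have hsp : Orb M u (P (Nat.findGreatest (fun m => Orb M u (P m)) L)) :=
      Nat.findGreatest_spec (P := fun m => Orb M u (P m)) (n := L) (m := 0) (Nat.zero_le L) horb0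
    exact ⟨Nat.findGreatest (fun m => Orb M u (P m)) L, Nat.findGreatest_le L, hsp, hfg⟩
  have hnotv : ¬ Orb M u v := fun ho =>
    hnr (orb_reach M h01 hP2 hcv (orb_back M h01 hP2 hcu ho))
  have hm0lt : m0 < L := by
    rcases Nat.lt_or_ge m0 L with h | h
    · exact h
    · exfalso
      apply hnotv
      have he : m0 = L := by omega
      rw [he, hPL] at horb
      exact horb
  have hcu' : Cyc M (P m0) := orb_cyc M h01 hP2 hcu horb
  have hL'pos : 0 < L - m0 := by omega
  have hP'walk : IsWalk M (L - m0) (seg m0 P) := seg_isWalk M hP (by omega)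
  have hP'0 : seg m0 P 0 = P m0 := by
    show P (m0 + 0) = P m0
    rw [Nat.add_zero]
  have hP'L : seg m0 P (L - m0) = v := by
    show P (m0 + (L - m0)) = v
    rw [(by omega : m0 + (L - m0) = L), hPL]
  have havoid : ∀ m, 1 ≤ m → m ≤ L - m0 → ¬ Orb M u (seg m0 P m) := by
    intro m h1 h2 ho
    exact hmax (m0 + m) (by omega) (by omega) ho
  obtain ⟨c, hcpos, hcfix⟩ := sig_period M h01 hP2 hcu'
  set Pv := pvFun M (seg m0 P) (L - m0) v with hPv
  have hPvW : ∀ m, M (Pv m) (Pv (m+1)) = 1 := pvFun_step M hP'walk hP'L hcv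
  have hedge : M (P m0) (Pv 1) = 1 := by
    have h1 : Pv 1 = seg m0 P 1 := by
      rw [hPv]
      show (if 1 ≤ L - m0 then seg m0 P 1 else _) = _
      rw [if_pos (by omega)]
    rw [h1, ← hP'0]
    exact hP'walk 0 (by omega)
  have hPv1 : ¬ Orb M u (Pv 1) := by
    have h1 : Pv 1 = seg m0 P 1 := by
      rw [hPv]
      show (if 1 ≤ L - m0 then seg m0 P 1 else _) = _
      rw [if_pos (by omega)]
    rw [h1]
    exact havoid 1 le_rfl (by omega)
  have hsigv : ∀ t, ¬ Orb M u ((sig M)^[t] v) := by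
    intro t ho
    apply hnr
    exact orb_reach M h01 hP2 hcv
      (orb_trans M ⟨t, rfl⟩ (orb_back M h01 hP2 hcu ho))
  -- the walks
  set F : Fin (n+2) → (Fin (n+1) → Fin b) := fun T =>
    if T.1 ≤ n then res n (xFun M T.1 c (P m0) Pv) else res n (fun t => (sig M)^[t] v)
    with hF
  have hmem : ∀ T, F T ∈ wSet M n := by
    intro T
    rw [hF]
    dsimp only
    split_ifs with h
    · exact res_mem_wSet M (xFun_walk M hcpos hcfix hcu' hPvW hedge n)
    · exact res_mem_wSet M (sig_walk M h01 hP2 hcv n)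
  have hXorb : ∀ T t : ℕ, t ≤ T → Orb M u (xFun M T c (P m0) Pv t) := by
    intro T t ht
    rw [xFun_le M ht]
    exact orb_trans M horb ⟨t + T*(c-1), rfl⟩
  have hlt : ∀ T T' : Fin (n+2), T.1 < T'.1 → F T ≠ F T' := by
    intro T T' hTT' hFF
    rcases Nat.lt_or_ge T'.1 (n+1) with h' | h'
    · -- both are X walks
      have hT : T.1 ≤ n := by omega
      have hT' : T'.1 ≤ n := by omega
      have := congrFun hFF ⟨T.1 + 1, by omega⟩
      rw [hF] at this
      dsimp only at this
      rw [if_pos hT, if_pos hT'] at this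
      have hv1 : res n (xFun M T.1 c (P m0) Pv) ⟨T.1 + 1, by omega⟩
          = Pv 1 := by
        show xFun M T.1 c (P m0) Pv (T.1 + 1) = Pv 1
        exact xFun_T1 M
      have hv2 : res n (xFun M T'.1 c (P m0) Pv) ⟨T.1 + 1, by omega⟩
          = (sig M)^[(T.1+1) + T'.1*(c-1)] (P m0) := by
        show xFun M T'.1 c (P m0) Pv (T.1 + 1) = _
        exact xFun_le M (by omega)
      rw [hv1, hv2] at this
      apply hPv1
      rw [this]
      exact orb_trans M horb ⟨(T.1+1) + T'.1*(c-1), rfl⟩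
    · -- T' is the Y walk
      have hT : T.1 ≤ n := by omega
      have hT'n : ¬ T'.1 ≤ n := by omega
      have := congrFun hFF ⟨0, by omega⟩
      rw [hF] at this
      dsimp only at this
      rw [if_pos hT, if_neg hT'n] at this
      have hv1 : res n (xFun M T.1 c (P m0) Pv) ⟨0, by omega⟩
          = (sig M)^[0 + T.1*(c-1)] (P m0) := by
        show xFun M T.1 c (P m0) Pv 0 = _
        exact xFun_le M (by omega)
      have hv2 : res n (fun t => (sig M)^[t] v) ⟨0, by omega⟩ = v := rfl
      rw [hv1, hv2] at this
      apply hsigv 0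
      show Orb M u v
      rw [← this]
      exact orb_trans M horb ⟨0 + T.1*(c-1), rfl⟩
  have hinj : Function.Injective F := by
    intro T T' hFF
    rcases lt_trichotomy T.1 T'.1 with h | h | h
    · exact absurd hFF (hlt T T' h)
    · exact Fin.ext h
    · exact absurd hFF.symm (hlt T' T h)
  calc n + 2 = (Finset.univ.image F).card := by
        rw [Finset.card_image_of_injective _ hinj, Finset.card_univ, Fintype.card_fin]
    _ ≤ (wSet M n).card := Finset.card_le_card
        (Finset.image_subset_iff.mpr (fun T _ => hmem T))

end UGaux

/-- For b ≥ 2 and M satisfying P1 and P2: if ‖M^n‖ is unbounded, then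
    n + 2 ≤ ‖M^n‖ for all n ≥ 1; moreover ‖M^n‖ ≤ C(n+b, n+1) for all n ≥ 1. -/
theorem unbounded_growth (b : ℕ) (hb : 2 ≤ b) (M : Matrix (Fin b) (Fin b) ℕ)
    (h01 : ∀ i j, M i j = 0 ∨ M i j = 1)
    (hP1 : ∀ i : Fin b, (∃ j, M j i ≠ 0) → ∃ j, M i j ≠ 0)
    (hP2 : ∀ (i : Fin b) (k : ℕ), 0 < k → (M ^ k) i i ≤ 1)
    (hunb : ¬ ∃ C : ℕ, ∀ n : ℕ, 0 < n → (∑ i, ∑ j, (M ^ n) i j) ≤ C) :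
    (∀ n : ℕ, 0 < n → n + 2 ≤ ∑ i, ∑ j, (M ^ n) i j) ∧
    (∀ n : ℕ, 0 < n → (∑ i, ∑ j, (M ^ n) i j) ≤ (n + b).choose (n + 1)) := by
  constructor
  · intro n hn
    obtain ⟨u, v, hcu, hcv, hr, hnr⟩ := UGaux.exists_config M h01 hP2 hunb
    rw [UGaux.sum_entries M h01 n]
    exact UGaux.many_walks M h01 hP2 hcu hcv hr hnr n
  · intro n hn
    exact UGaux.upper_bound M h01 hP2 n
end
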